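/- arXiv:1601.05774 — 3 statements merged into one kernel-verified Lean document; each statement's English description precedes it below -/
import Mathlib

section
/- Let Φ : (M₁,Ω₁) → (M₂,Ω₂) be a deterministic (multiplicative) state-preserving Markov map with adjoint Φ^♯. Then the contraction U_Φ satisfies U_Φ* A₂ U_Φ = Φ^♯(A₂) for all A₂ ∈ M₂, and the isometry Λ_{Φ^♯} is a co-isometry as well: Λ_{Φ^♯} Λ_{Φ^♯}* = I on L_{Φ^♯}. -/
/-!
Everything happens in the Stinespring space of `Φ^♯`. Multiplicativity of `Φ` and the duality
`⟨Ω₂, B Φ(A) Ω₂⟩ = ⟨Ω₁, Φ^♯(B) A Ω₁⟩` show that `[Φ(D) ⊗ Ω₁]` and `[1 ⊗ DΩ₁]` have the same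
norm and inner product with each other, so they are equal. Pairing with `[B ⊗ AΩ₁]` gives
`⟨DΩ₁, Φ^♯(B) AΩ₁⟩ = ⟨Φ(D)Ω₂, B Φ(A)Ω₂⟩`, which is `U_Φ* B U_Φ = Φ^♯(B)` on the cyclic vectors.
The same argument gives `[X ⊗ AΩ₁] = [XΦ(A) ⊗ Ω₁] = Λ(XΦ(A)Ω₂)`; since each `h ↦ [X ⊗ h]` is
bounded, the isometry `Λ` has dense range and is therefore unitary.
-/

open scoped InnerProductSpace ComplexOrder
open ContinuousLinearMap (adjoint)

noncomputable section

/-- Complete positivity of a map `Φ` relative to a subset `M` of operators: matrix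
amplifications preserve positivity, expressed on vectors. -/
def IsCP {H K : Type*} [NormedAddCommGroup H] [InnerProductSpace ℂ H]
    [NormedAddCommGroup K] [InnerProductSpace ℂ K]
    (M : Set (H →L[ℂ] H)) (Φ : (H →L[ℂ] H) →ₗ[ℂ] (K →L[ℂ] K)) : Prop :=
  ∀ (n : ℕ) (B : Fin n → Fin n → (H →L[ℂ] H)),
    (∀ i j, B i j ∈ M) →
    (∀ v : Fin n → H, 0 ≤ ∑ i, ∑ j, ⟪v i, (B i j) (v j)⟫_ℂ) →
    ∀ w : Fin n → K, 0 ≤ ∑ i, ∑ j, ⟪w i, (Φ (B i j)) (w j)⟫_ℂ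

/-- The Stinespring space `L_Φ` of a (completely positive) map `Φ`, defined on the
subset `M` of `B(H)` and taking values in `B(K)`: the separation-completion of the
algebraic tensor product `M ⊗ K` with respect to the semi-inner product
`⟨A ⊗ h, X ⊗ k⟩ = ⟨h, Φ(A* X) k⟩`, presented abstractly as a Hilbert space `L`
together with the bilinear map `emb A h = [A ⊗ h]` having dense span. -/
structure StinespringData {H K : Type*}
    [NormedAddCommGroup H] [InnerProductSpace ℂ H] [CompleteSpace H]
    [NormedAddCommGroup K] [InnerProductSpace ℂ K] [CompleteSpace K]
    (M : Set (H →L[ℂ] H)) (Φ : (H →L[ℂ] H) →ₗ[ℂ] (K →L[ℂ] K))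
    (L : Type*) [NormedAddCommGroup L] [InnerProductSpace ℂ L] [CompleteSpace L] where
  emb : (H →L[ℂ] H) →ₗ[ℂ] K →ₗ[ℂ] L
  inner_emb : ∀ A X : H →L[ℂ] H, A ∈ M → X ∈ M → ∀ h k : K,
    ⟪emb A h, emb X k⟫_ℂ = ⟪h, Φ (star A * X) k⟫_ℂ
  dense_span :
    (Submodule.span ℂ {x : L | ∃ A ∈ M, ∃ h : K, x = emb A h}).topologicalClosure = ⊤
/-- `Ω` is a cyclic vector for the set of operators `M`. -/
def IsCyclicVec {H : Type*} [NormedAddCommGroup H] [InnerProductSpace ℂ H]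
    (M : Set (H →L[ℂ] H)) (Ω : H) : Prop :=
  (Submodule.span ℂ {x : H | ∃ A ∈ M, x = A Ω}).topologicalClosure = ⊤

/-- `Ω` is a separating vector for the set of operators `M`. -/
def IsSeparatingVec {H : Type*} [NormedAddCommGroup H] [InnerProductSpace ℂ H]
    (M : Set (H →L[ℂ] H)) (Ω : H) : Prop :=
  ∀ A ∈ M, A Ω = 0 → A = 0

/-- `Φ` preserves the vector states given by `Ω₁`, `Ω₂` on the algebra `M`. -/
def IsStatePreserving {H K : Type*} [NormedAddCommGroup H] [InnerProductSpace ℂ H]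
    [NormedAddCommGroup K] [InnerProductSpace ℂ K]
    (M : Set (H →L[ℂ] H)) (Ω₁ : H) (Ω₂ : K)
    (Φ : (H →L[ℂ] H) →ₗ[ℂ] (K →L[ℂ] K)) : Prop :=
  ∀ A ∈ M, ⟪Ω₂, Φ A Ω₂⟫_ℂ = ⟪Ω₁, A Ω₁⟫_ℂ

theorem ext_inner_left_of_dense_span {E : Type*} [NormedAddCommGroup E] [InnerProductSpace ℂ E]
    {S : Set E} (hS : Dense (Submodule.span ℂ S : Set E)) {x y : E}
    (h : ∀ v ∈ S, ⟪v, x⟫_ℂ = ⟪v, y⟫_ℂ) : x = y := by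
  have hxy : innerSL ℂ x = innerSL ℂ y := ContinuousLinearMap.ext_on hS fun v hv => by
    rw [innerSL_apply_apply, innerSL_apply_apply, ← inner_conj_symm, h v hv, inner_conj_symm]
  exact ext_inner_right ℂ fun v => by simpa using congr($hxy v)

theorem ContinuousLinearMap.ext_inner_of_dense_span {E : Type*} [NormedAddCommGroup E]
    [InnerProductSpace ℂ E] {S : Set E} (hS : Dense (Submodule.span ℂ S : Set E))
    {T T' : E →L[ℂ] E} (h : ∀ u ∈ S, ∀ v ∈ S, ⟪u, T v⟫_ℂ = ⟪u, T' v⟫_ℂ) : T = T' :=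
  ext_on hS fun v hv => ext_inner_left_of_dense_span hS fun u hu => h u hu v hv

theorem eq_of_inner_eq_inner_self {E : Type*} [NormedAddCommGroup E] [InnerProductSpace ℂ E]
    {x y : E} (hxy : ⟪x, y⟫_ℂ = ⟪x, x⟫_ℂ) (hy : ⟪y, y⟫_ℂ = ⟪x, x⟫_ℂ) : x = y := by
  have hyx : ⟪y, x⟫_ℂ = ⟪x, x⟫_ℂ := by rw [← inner_conj_symm, hxy, inner_conj_symm]
  rw [← sub_eq_zero, ← inner_self_eq_zero (𝕜 := ℂ), inner_sub_left, inner_sub_right,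
    inner_sub_right, hxy, hyx, hy]
  ring

theorem ContinuousLinearMap.inner_star_mul_apply {E : Type*} [NormedAddCommGroup E]
    [InnerProductSpace ℂ E] [CompleteSpace E] (X Y : E →L[ℂ] E) (x y : E) :
    ⟪x, (star X * Y) y⟫_ℂ = ⟪X x, Y y⟫_ℂ := by
  rw [mul_apply_eq_comp, star_eq_adjoint, adjoint_inner_right]

theorem ContinuousLinearMap.comp_adjoint_eq_one_of_denseRange {E F : Type*}
    [NormedAddCommGroup E] [InnerProductSpace ℂ E] [CompleteSpace E]
    [NormedAddCommGroup F] [InnerProductSpace ℂ F] [CompleteSpace F] {Λ : E →L[ℂ] F}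
    (hiso : adjoint Λ ∘L Λ = 1) (hΛ : DenseRange Λ) : Λ ∘L adjoint Λ = 1 := by
  refine coe_injective (LinearMap.coe_injective (hΛ.equalizer (Λ ∘L adjoint Λ).continuous
    continuous_id (funext fun x => ?_)))
  simp [← comp_apply (adjoint Λ) Λ, hiso]

theorem IsCyclicVec.dense {H : Type*} [NormedAddCommGroup H] [InnerProductSpace ℂ H]
    {M : Set (H →L[ℂ] H)} {Ω : H} (h : IsCyclicVec M Ω) :
    Dense (Submodule.span ℂ {x : H | ∃ A ∈ M, x = A Ω} : Set H) :=
  Submodule.dense_iff_topologicalClosure_eq_top.mpr h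

namespace StinespringData

variable {H K L : Type*}
    [NormedAddCommGroup H] [InnerProductSpace ℂ H] [CompleteSpace H]
    [NormedAddCommGroup K] [InnerProductSpace ℂ K] [CompleteSpace K]
    [NormedAddCommGroup L] [InnerProductSpace ℂ L] [CompleteSpace L]
    {Ψ : (H →L[ℂ] H) →ₗ[ℂ] (K →L[ℂ] K)}

theorem norm_emb_apply_le {M : Set (H →L[ℂ] H)} (S : StinespringData M Ψ L) {B : H →L[ℂ] H}
    (hB : B ∈ M) (h : K) : ‖S.emb B h‖ ≤ √‖Ψ (star B * B)‖ * ‖h‖ := by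
  refine le_of_pow_le_pow_left₀ two_ne_zero (by positivity) ?_
  rw [mul_pow, Real.sq_sqrt (norm_nonneg _), ← inner_self_eq_norm_sq (𝕜 := ℂ),
    S.inner_emb B B hB hB]
  calc RCLike.re ⟪h, Ψ (star B * B) h⟫_ℂ
      ≤ ‖h‖ * ‖Ψ (star B * B) h‖ := (RCLike.re_le_norm _).trans (norm_inner_le_norm _ _)
    _ ≤ ‖h‖ * (‖Ψ (star B * B)‖ * ‖h‖) := by gcongr; exact (Ψ _).le_opNorm h
    _ = ‖Ψ (star B * B)‖ * ‖h‖ ^ 2 := by ring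

theorem continuous_emb {M : Set (H →L[ℂ] H)} (S : StinespringData M Ψ L) {B : H →L[ℂ] H}
    (hB : B ∈ M) : Continuous (S.emb B) :=
  AddMonoidHomClass.continuous_of_bound (S.emb B) _ (S.norm_emb_apply_le hB)

theorem denseRange_of_emb_mem_range {M : Set (H →L[ℂ] H)} (S : StinespringData M Ψ L)
    {E : Type*} [NormedAddCommGroup E] [NormedSpace ℂ E] {T : Set K}
    (hT : Dense (Submodule.span ℂ T : Set K)) (Λ : E →L[ℂ] L)
    (h : ∀ B ∈ M, ∀ t ∈ T, S.emb B t ∈ Set.range Λ) : DenseRange Λ := by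
  set R := LinearMap.range (Λ : E →ₗ[ℂ] L)
  have hR : ∀ B ∈ M, ∀ k : K, S.emb B k ∈ R.topologicalClosure := by
    intro B hB k
    have hspan : Submodule.span ℂ T ≤ R.topologicalClosure.comap (S.emb B) :=
      Submodule.span_le.mpr fun t ht => R.le_topologicalClosure (h B hB t ht)
    exact closure_minimal hspan (R.isClosed_topologicalClosure.preimage (S.continuous_emb hB))
      (hT.closure_eq ▸ Set.mem_univ k)
  have hRtop : R.topologicalClosure = ⊤ := by
    rw [eq_top_iff, ← S.dense_span]
    refine Submodule.topologicalClosure_minimal _ ?_ R.isClosed_topologicalClosure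
    rw [Submodule.span_le]
    rintro _ ⟨B, hB, k, rfl⟩
    exact hR B hB k
  rw [DenseRange, ← ContinuousLinearMap.coe_coe, ← LinearMap.coe_range]
  exact Submodule.dense_iff_topologicalClosure_eq_top.mpr hRtop

theorem inner_emb_apply_emb_apply {M : StarSubalgebra ℂ (H →L[ℂ] H)}
    (S : StinespringData (M : Set (H →L[ℂ] H)) Ψ L) {Ω : H} {Ω' : K}
    (hΨ : IsStatePreserving (M : Set (H →L[ℂ] H)) Ω Ω' Ψ) {X Y : H →L[ℂ] H}
    (hX : X ∈ M) (hY : Y ∈ M) : ⟪S.emb X Ω', S.emb Y Ω'⟫_ℂ = ⟪X Ω, Y Ω⟫_ℂ := by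
  rw [S.inner_emb X Y hX hY, hΨ _ (mul_mem (star_mem hX) hY),
    ContinuousLinearMap.inner_star_mul_apply]

end StinespringData

section DeterministicMarkovMap

variable {H₁ H₂ L : Type*}
    [NormedAddCommGroup H₁] [InnerProductSpace ℂ H₁] [CompleteSpace H₁]
    [NormedAddCommGroup H₂] [InnerProductSpace ℂ H₂] [CompleteSpace H₂]
    [NormedAddCommGroup L] [InnerProductSpace ℂ L] [CompleteSpace L]
    {M₁ : StarSubalgebra ℂ (H₁ →L[ℂ] H₁)} {M₂ : StarSubalgebra ℂ (H₂ →L[ℂ] H₂)}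
    {Ω₁ : H₁} {Ω₂ : H₂}
    {Φ : (H₁ →L[ℂ] H₁) →ₗ[ℂ] (H₂ →L[ℂ] H₂)} {Φs : (H₂ →L[ℂ] H₂) →ₗ[ℂ] (H₁ →L[ℂ] H₁)}

theorem inner_map_apply_map_apply (hmult : ∀ A ∈ M₁, ∀ B ∈ M₁, Φ (A * B) = Φ A * Φ B)
    (hstar : ∀ A ∈ M₁, Φ (star A) = star (Φ A))
    (hstate : IsStatePreserving (M₁ : Set (H₁ →L[ℂ] H₁)) Ω₁ Ω₂ Φ) {A B : H₁ →L[ℂ] H₁}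
    (hA : A ∈ M₁) (hB : B ∈ M₁) : ⟪Φ A Ω₂, Φ B Ω₂⟫_ℂ = ⟪A Ω₁, B Ω₁⟫_ℂ := by
  rw [← ContinuousLinearMap.inner_star_mul_apply, ← hstar A hA, ← hmult _ (star_mem hA) _ hB,
    hstate _ (mul_mem (star_mem hA) hB), ContinuousLinearMap.inner_star_mul_apply]

namespace StinespringData

theorem emb_map_apply_eq_emb_one_apply
    (S : StinespringData (M₂ : Set (H₂ →L[ℂ] H₂)) Φs L)
    (hstates : IsStatePreserving (M₂ : Set (H₂ →L[ℂ] H₂)) Ω₂ Ω₁ Φs)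
    (hadj : ∀ A ∈ M₁, ∀ B ∈ M₂, ⟪Ω₂, B (Φ A Ω₂)⟫_ℂ = ⟪Ω₁, Φs B (A Ω₁)⟫_ℂ)
    (hmem : ∀ A ∈ M₁, Φ A ∈ M₂)
    (hisom : ∀ A ∈ M₁, ∀ B ∈ M₁, ⟪Φ A Ω₂, Φ B Ω₂⟫_ℂ = ⟪A Ω₁, B Ω₁⟫_ℂ) (hunitals : Φs 1 = 1)
    {D : H₁ →L[ℂ] H₁} (hD : D ∈ M₁) : S.emb (Φ D) Ω₁ = S.emb 1 (D Ω₁) := by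
  have hΦD := hmem D hD
  refine eq_of_inner_eq_inner_self ?_ ?_
  · rw [S.inner_emb _ _ hΦD (one_mem _), mul_one, ← hadj D hD _ (star_mem hΦD),
      ContinuousLinearMap.star_eq_adjoint, ContinuousLinearMap.adjoint_inner_right,
      S.inner_emb_apply_emb_apply hstates hΦD hΦD]
  · rw [S.inner_emb _ _ (one_mem _) (one_mem _), star_one, mul_one, hunitals,
      one_apply_eq_self, S.inner_emb_apply_emb_apply hstates hΦD hΦD, hisom D hD D hD]

theorem inner_adj_apply_eq_inner_map_apply
    (S : StinespringData (M₂ : Set (H₂ →L[ℂ] H₂)) Φs L)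
    (hstates : IsStatePreserving (M₂ : Set (H₂ →L[ℂ] H₂)) Ω₂ Ω₁ Φs)
    (hadj : ∀ A ∈ M₁, ∀ B ∈ M₂, ⟪Ω₂, B (Φ A Ω₂)⟫_ℂ = ⟪Ω₁, Φs B (A Ω₁)⟫_ℂ)
    (hmem : ∀ A ∈ M₁, Φ A ∈ M₂)
    (hisom : ∀ A ∈ M₁, ∀ B ∈ M₁, ⟪Φ A Ω₂, Φ B Ω₂⟫_ℂ = ⟪A Ω₁, B Ω₁⟫_ℂ) (hunitals : Φs 1 = 1)
    {D A : H₁ →L[ℂ] H₁} {B : H₂ →L[ℂ] H₂} (hD : D ∈ M₁) (hA : A ∈ M₁) (hB : B ∈ M₂) :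
    ⟪D Ω₁, Φs B (A Ω₁)⟫_ℂ = ⟪Φ D Ω₂, B (Φ A Ω₂)⟫_ℂ := by
  have hΦD := hmem D hD
  calc ⟪D Ω₁, Φs B (A Ω₁)⟫_ℂ = ⟪S.emb 1 (D Ω₁), S.emb B (A Ω₁)⟫_ℂ := by
        rw [S.inner_emb _ _ (one_mem _) hB, star_one, one_mul]
    _ = ⟪S.emb (Φ D) Ω₁, S.emb B (A Ω₁)⟫_ℂ := by
        rw [S.emb_map_apply_eq_emb_one_apply hstates hadj hmem hisom hunitals hD]
    _ = ⟪Φ D Ω₂, B (Φ A Ω₂)⟫_ℂ := by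
        rw [S.inner_emb _ _ hΦD hB, ← hadj A hA _ (mul_mem (star_mem hΦD) hB),
          ContinuousLinearMap.inner_star_mul_apply]

theorem emb_apply_eq_emb_mul_map_apply
    (S : StinespringData (M₂ : Set (H₂ →L[ℂ] H₂)) Φs L)
    (hstates : IsStatePreserving (M₂ : Set (H₂ →L[ℂ] H₂)) Ω₂ Ω₁ Φs)
    (hadj : ∀ A ∈ M₁, ∀ B ∈ M₂, ⟪Ω₂, B (Φ A Ω₂)⟫_ℂ = ⟪Ω₁, Φs B (A Ω₁)⟫_ℂ)
    (hmem : ∀ A ∈ M₁, Φ A ∈ M₂)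
    (hisom : ∀ A ∈ M₁, ∀ B ∈ M₁, ⟪Φ A Ω₂, Φ B Ω₂⟫_ℂ = ⟪A Ω₁, B Ω₁⟫_ℂ) (hunitals : Φs 1 = 1)
    {X : H₂ →L[ℂ] H₂} {A : H₁ →L[ℂ] H₁} (hX : X ∈ M₂) (hA : A ∈ M₁) :
    S.emb X (A Ω₁) = S.emb (X * Φ A) Ω₁ := by
  have hXΦA : X * Φ A ∈ M₂ := mul_mem hX (hmem A hA)
  refine (eq_of_inner_eq_inner_self ?_ ?_).symm
  · rw [S.inner_emb _ _ hXΦA hX, ← hadj A hA _ (mul_mem (star_mem hXΦA) hX),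
      ContinuousLinearMap.inner_star_mul_apply, S.inner_emb_apply_emb_apply hstates hXΦA hXΦA,
      mul_apply_eq_comp]
  · rw [S.inner_emb _ _ hX hX, S.inner_adj_apply_eq_inner_map_apply hstates hadj hmem hisom
      hunitals hA hA (mul_mem (star_mem hX) hX), ContinuousLinearMap.inner_star_mul_apply,
      S.inner_emb_apply_emb_apply hstates hXΦA hXΦA, mul_apply_eq_comp]

end StinespringData

end DeterministicMarkovMap

theorem stmt16_general
    {H₁ H₂ : Type*} [NormedAddCommGroup H₁] [InnerProductSpace ℂ H₁] [CompleteSpace H₁]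
    [NormedAddCommGroup H₂] [InnerProductSpace ℂ H₂] [CompleteSpace H₂]
    (M₁ : VonNeumannAlgebra H₁) (M₂ : VonNeumannAlgebra H₂) (Ω₁ : H₁) (Ω₂ : H₂)
    (hcyc₁ : IsCyclicVec (M₁ : Set (H₁ →L[ℂ] H₁)) Ω₁)
    (hcyc₂ : IsCyclicVec (M₂ : Set (H₂ →L[ℂ] H₂)) Ω₂)
    -- Φ is a deterministic (multiplicative) state-preserving Markov map
    (Φ : (H₁ →L[ℂ] H₁) →ₗ[ℂ] (H₂ →L[ℂ] H₂))
    (hmem : ∀ A ∈ M₁, Φ A ∈ M₂)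
    (hmult : ∀ A ∈ M₁, ∀ B ∈ M₁, Φ (A * B) = Φ A * Φ B)
    (hstar : ∀ A ∈ M₁, Φ (star A) = star (Φ A))
    (hstate : IsStatePreserving (M₁ : Set (H₁ →L[ℂ] H₁)) Ω₁ Ω₂ Φ)
    -- the adjoint Φ^♯ of Φ
    (Φs : (H₂ →L[ℂ] H₂) →ₗ[ℂ] (H₁ →L[ℂ] H₁))
    (hunitals : Φs 1 = 1)
    (hstates : IsStatePreserving (M₂ : Set (H₂ →L[ℂ] H₂)) Ω₂ Ω₁ Φs)
    (hadj : ∀ A ∈ M₁, ∀ B ∈ M₂, ⟪Ω₂, B (Φ A Ω₂)⟫_ℂ = ⟪Ω₁, Φs B (A Ω₁)⟫_ℂ)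
    (U : H₁ →L[ℂ] H₂) (hU : ∀ A ∈ M₁, U (A Ω₁) = Φ A Ω₂)
    (Ls : Type*) [NormedAddCommGroup Ls] [InnerProductSpace ℂ Ls] [CompleteSpace Ls]
    (Ss : StinespringData (M₂ : Set (H₂ →L[ℂ] H₂)) Φs Ls)
    (Λ : H₂ →L[ℂ] Ls) (hΛ : ∀ B ∈ M₂, Λ (B Ω₂) = Ss.emb B Ω₁) :
    (∀ A₂ ∈ M₂, adjoint U ∘L A₂ ∘L U = Φs A₂) ∧
      Λ ∘L adjoint Λ = 1 := by
  have hisom : ∀ A ∈ M₁, ∀ B ∈ M₁, ⟪Φ A Ω₂, Φ B Ω₂⟫_ℂ = ⟪A Ω₁, B Ω₁⟫_ℂ :=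
    fun _ hA _ hB =>
      inner_map_apply_map_apply (M₁ := M₁.toStarSubalgebra) hmult hstar hstate hA hB
  have hΛisom : adjoint Λ ∘L Λ = 1 := by
    refine ContinuousLinearMap.ext_inner_of_dense_span hcyc₂.dense ?_
    rintro _ ⟨B', hB', rfl⟩ _ ⟨B, hB, rfl⟩
    rw [ContinuousLinearMap.comp_apply, ContinuousLinearMap.adjoint_inner_right, hΛ B' hB',
      hΛ B hB, Ss.inner_emb_apply_emb_apply (M := M₂.toStarSubalgebra) hstates hB' hB,
      one_apply_eq_self]
  have hΛdense : DenseRange Λ := by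
    refine Ss.denseRange_of_emb_mem_range hcyc₁.dense Λ ?_
    rintro X hX _ ⟨A, hA, rfl⟩
    exact ⟨(X * Φ A) Ω₂, by rw [hΛ _ (mul_mem hX (hmem A hA)),
      Ss.emb_apply_eq_emb_mul_map_apply hstates hadj hmem hisom hunitals hX hA]⟩
  refine ⟨fun A₂ hA₂ => ContinuousLinearMap.ext_inner_of_dense_span hcyc₁.dense ?_,
    ContinuousLinearMap.comp_adjoint_eq_one_of_denseRange hΛisom hΛdense⟩
  rintro _ ⟨D, hD, rfl⟩ _ ⟨A, hA, rfl⟩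
  rw [ContinuousLinearMap.comp_apply, ContinuousLinearMap.comp_apply,
    ContinuousLinearMap.adjoint_inner_right, hU A hA, hU D hD,
    Ss.inner_adj_apply_eq_inner_map_apply hstates hadj hmem hisom hunitals hD hA hA₂]

/-- For a deterministic (multiplicative) state-preserving Markov map
`Φ` with adjoint `Φ^♯`, one has `U_Φ* A₂ U_Φ = Φ^♯(A₂)` for all `A₂ ∈ M₂`, and
`Λ_{Φ^♯}` is a co-isometry: `Λ_{Φ^♯} Λ_{Φ^♯}* = I` on `L_{Φ^♯}`. -/
theorem stmt16
    {H₁ H₂ : Type*} [NormedAddCommGroup H₁] [InnerProductSpace ℂ H₁] [CompleteSpace H₁]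
    [NormedAddCommGroup H₂] [InnerProductSpace ℂ H₂] [CompleteSpace H₂]
    (M₁ : VonNeumannAlgebra H₁) (M₂ : VonNeumannAlgebra H₂) (Ω₁ : H₁) (Ω₂ : H₂)
    (hΩ₁ : ‖Ω₁‖ = 1) (hΩ₂ : ‖Ω₂‖ = 1)
    (hcyc₁ : IsCyclicVec (M₁ : Set (H₁ →L[ℂ] H₁)) Ω₁)
    (hsep₁ : IsSeparatingVec (M₁ : Set (H₁ →L[ℂ] H₁)) Ω₁)
    (hcyc₂ : IsCyclicVec (M₂ : Set (H₂ →L[ℂ] H₂)) Ω₂)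
    (hsep₂ : IsSeparatingVec (M₂ : Set (H₂ →L[ℂ] H₂)) Ω₂)
    -- Φ is a deterministic (multiplicative) state-preserving Markov map
    (Φ : (H₁ →L[ℂ] H₁) →ₗ[ℂ] (H₂ →L[ℂ] H₂))
    (hmem : ∀ A ∈ M₁, Φ A ∈ M₂) (hunital : Φ 1 = 1)
    (hmult : ∀ A ∈ M₁, ∀ B ∈ M₁, Φ (A * B) = Φ A * Φ B)
    (hstar : ∀ A ∈ M₁, Φ (star A) = star (Φ A))
    (hstate : IsStatePreserving (M₁ : Set (H₁ →L[ℂ] H₁)) Ω₁ Ω₂ Φ)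
    -- the adjoint Φ^♯ of Φ
    (Φs : (H₂ →L[ℂ] H₂) →ₗ[ℂ] (H₁ →L[ℂ] H₁))
    (hmems : ∀ B ∈ M₂, Φs B ∈ M₁) (hunitals : Φs 1 = 1)
    (hCPs : IsCP (M₂ : Set (H₂ →L[ℂ] H₂)) Φs)
    (hstates : IsStatePreserving (M₂ : Set (H₂ →L[ℂ] H₂)) Ω₂ Ω₁ Φs)
    (hadj : ∀ A ∈ M₁, ∀ B ∈ M₂, ⟪Ω₂, B (Φ A Ω₂)⟫_ℂ = ⟪Ω₁, Φs B (A Ω₁)⟫_ℂ)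
    (U : H₁ →L[ℂ] H₂) (hU : ∀ A ∈ M₁, U (A Ω₁) = Φ A Ω₂)
    (Ls : Type*) [NormedAddCommGroup Ls] [InnerProductSpace ℂ Ls] [CompleteSpace Ls]
    (Ss : StinespringData (M₂ : Set (H₂ →L[ℂ] H₂)) Φs Ls)
    (Λ : H₂ →L[ℂ] Ls) (hΛ : ∀ B ∈ M₂, Λ (B Ω₂) = Ss.emb B Ω₁) :
    (∀ A₂ ∈ M₂, adjoint U ∘L A₂ ∘L U = Φs A₂) ∧
      Λ ∘L adjoint Λ = 1 :=
  stmt16_general M₁ M₂ Ω₁ Ω₂ hcyc₁ hcyc₂ Φ hmem hmult hstar hstate Φs hunitals hstates hadj U hU Ls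
    Ss Λ hΛ
end
end

section
/- Let Φ : (M₁,Ω₁) → (M₂,Ω₂) be a state-preserving Markov map with adjoint, Ĵ an anti-unitary on L_{Φ^♯} with Ĵ V_{Φ^♯} = V_{Φ^♯} J₁, and let R be the von Neumann algebra generated by σ_{Φ^♯}(M₂) and Ĵ*τ_{Φ^♯}(M₁')Ĵ. If V_{Φ^♯}* R V_{Φ^♯} ⊆ M₁ and Λ_{Φ^♯}* R Λ_{Φ^♯} ⊆ M₂, then the vector Ω_{Φ^♯} = [1⊗Ω₁] is separating for R (and cyclic), so (R, Ω_{Φ^♯}) is in standard form, and Φ is factorizable: Φ = σ_{Φ^♯}^♯ ∘ β with β(A₁) = Ĵ*τ_{Φ^♯}(J₁A₁J₁)Ĵ. -/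
open scoped InnerProductSpace ComplexOrder
open ContinuousLinearMap (adjoint)

noncomputable section

/-- The modular conjugation of a von Neumann algebra `M` in standard form with cyclic and
separating vector `Ω`: an anti-unitary involution `J` fixing `Ω`, together with the induced
conjugation `conj A = J A J` on operators, which exchanges `M` with its commutant `M'` and
acts as the identity on the natural positive cone. -/
structure ModularConjugation {H : Type*}
    [NormedAddCommGroup H] [InnerProductSpace ℂ H] [CompleteSpace H]
    (M : VonNeumannAlgebra H) (Ω : H) where
  J : H → H
  conj : (H →L[ℂ] H) → (H →L[ℂ] H)
  map_add : ∀ x y, J (x + y) = J x + J y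
  map_smul : ∀ (a : ℂ) (x : H), J (a • x) = (starRingEnd ℂ a) • J x
  invol : ∀ x, J (J x) = x
  inner_map : ∀ x y, ⟪J x, J y⟫_ℂ = ⟪y, x⟫_ℂ
  fixΩ : J Ω = Ω
  conj_apply : ∀ (A : H →L[ℂ] H) (x : H), conj A x = J (A (J x))
  conj_mem : ∀ A ∈ M, conj A ∈ M.commutant
  conj_mem' : ∀ Y ∈ M.commutant, conj Y ∈ M
  fix_cone : ∀ A ∈ M, J ((A * conj A) Ω) = (A * conj A) Ω

/-- The von Neumann algebra (as a set of operators) generated by a self-adjoint set `S`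
of bounded operators: the double commutant of `S`. -/
def doubleCommutant {K : Type*} [NormedAddCommGroup K] [InnerProductSpace ℂ K]
    (S : Set (K →L[ℂ] K)) : Set (K →L[ℂ] K) :=
  Set.centralizer (Set.centralizer S)

/-!
A `T ∈ R` with `T [1 ⊗ Ω₁] = 0` satisfies `T Λ Ω₂ = 0`; since `Λ* T* T Λ` is a positive element
of `M₂` and `Ω₂` is separating, `T Λ = 0`. For `X ∈ M₂` the operator `T σ(X) ∈ R` then kills
`[1 ⊗ Ω₁] = V Ω₁`, and the same argument with `V` and `M₁` gives `T [X ⊗ h] = 0`; these vectors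
span a dense subspace, so `T = 0`. Cyclicity follows from `σ(X) β(A) [1 ⊗ Ω₁] = [X ⊗ A Ω₁]`, and
the factorization from `⟪B Ω₂, Λ* β(A) Λ Ω₂⟫ = ⟪Ω₁, Φ^♯(B*) A Ω₁⟫ = ⟪B Ω₂, Φ(A) Ω₂⟫`, using that
`Ω₂` is cyclic and separating for `M₂`.
-/

section DenseSpan

variable {E F : Type*} [NormedAddCommGroup E] [InnerProductSpace ℂ E]
  [NormedAddCommGroup F] [InnerProductSpace ℂ F] {s : Set E}

theorem eq_zero_of_inner_eq_zero_of_span (hs : (Submodule.span ℂ s).topologicalClosure = ⊤)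
    {v : E} (h : ∀ x ∈ s, ⟪x, v⟫_ℂ = 0) : v = 0 := by
  have hv : innerSL ℂ v = 0 :=
    ContinuousLinearMap.ext_on (Submodule.dense_iff_topologicalClosure_eq_top.mpr hs)
      fun x hx => by
        show ⟪v, x⟫_ℂ = 0
        rw [← inner_conj_symm, h x hx, map_zero]
  simpa using congr($hv v)

theorem mem_of_span_topologicalClosure_eq_top (hs : (Submodule.span ℂ s).topologicalClosure = ⊤)
    {N : Submodule ℂ F} (hN : IsClosed (N : Set F)) (f : E →L[ℂ] F) (h : ∀ x ∈ s, f x ∈ N)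
    (x : E) : f x ∈ N := by
  have hle : Submodule.span ℂ s ≤ N.comap (f : E →ₗ[ℂ] F) := Submodule.span_le.mpr h
  have hclosure := Submodule.topologicalClosure_minimal _ hle (hN.preimage f.continuous)
  rw [hs] at hclosure
  exact hclosure Submodule.mem_top

end DenseSpan

theorem IsSeparatingVec.apply_eq_zero_of_compression_mem {K L : Type*}
    [NormedAddCommGroup K] [InnerProductSpace ℂ K] [CompleteSpace K]
    [NormedAddCommGroup L] [InnerProductSpace ℂ L] [CompleteSpace L]
    {M : Set (K →L[ℂ] K)} {Ω : K} (hsep : IsSeparatingVec M Ω) (W : K →L[ℂ] L)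
    (T : L →L[ℂ] L) (hmem : adjoint W ∘L (adjoint T ∘L T) ∘L W ∈ M) (hΩ : T (W Ω) = 0)
    (k : K) : T (W k) = 0 := by
  set P := adjoint W ∘L (adjoint T ∘L T) ∘L W
  have hP : ∀ x y : K, ⟪x, P y⟫_ℂ = ⟪T (W x), T (W y)⟫_ℂ := fun x y => by
    simp only [P, ContinuousLinearMap.comp_apply, ContinuousLinearMap.adjoint_inner_right]
  have hPΩ : P Ω = 0 := inner_self_eq_zero.mp (by rw [hP, hΩ, inner_zero_right])
  have hP0 : P = 0 := hsep P hmem hPΩ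
  exact inner_self_eq_zero.mp (by rw [← hP, hP0, zero_apply, inner_zero_right])

theorem star_mem_doubleCommutant {K : Type*} [NormedAddCommGroup K] [InnerProductSpace ℂ K]
    [CompleteSpace K] {S : Set (K →L[ℂ] K)} (hS : ∀ T ∈ S, star T ∈ S) {T : K →L[ℂ] K}
    (hT : T ∈ doubleCommutant S) : star T ∈ doubleCommutant S :=
  Set.star_mem_centralizer' (fun _ => Set.star_mem_centralizer' hS) hT

section Antiunitary

variable {E : Type*} [NormedAddCommGroup E] [InnerProductSpace ℂ E] {J J' : E → E}

theorem antiunitary_conj_mul (hJJ' : ∀ x, J (J' x) = x) {T T' S S' U : E →L[ℂ] E}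
    (hS : ∀ x, S x = J' (T (J x))) (hS' : ∀ x, S' x = J' (T' (J x)))
    (hU : ∀ x, U x = J' ((T * T') (J x))) : U = S * S' :=
  ContinuousLinearMap.ext fun x => by
    rw [mul_apply_eq_comp, hU, hS, hS', hJJ', mul_apply_eq_comp]

theorem antiunitary_conj_adjoint [CompleteSpace E] (hinner : ∀ x y, ⟪J x, J y⟫_ℂ = ⟪y, x⟫_ℂ)
    (hJJ' : ∀ x, J (J' x) = x) {T S U : E →L[ℂ] E}
    (hS : ∀ x, S x = J' (T (J x))) (hU : ∀ x, U x = J' (adjoint T (J x))) :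
    U = adjoint S := by
  have hJ' : ∀ a b, ⟪J' a, b⟫_ℂ = ⟪J b, a⟫_ℂ := fun a b => by
    rw [← inner_conj_symm, ← hinner, hJJ', inner_conj_symm]
  refine (ContinuousLinearMap.eq_adjoint_iff U S).mpr fun x y => ?_
  rw [hU, hS, hJ', ContinuousLinearMap.adjoint_inner_right, ← inner_conj_symm x, hJ',
    inner_conj_symm]

end Antiunitary

namespace ModularConjugation

variable {H : Type*} [NormedAddCommGroup H] [InnerProductSpace ℂ H] [CompleteSpace H]
  {M : VonNeumannAlgebra H} {Ω : H} (J : ModularConjugation M Ω)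

theorem conj_mul (A B : H →L[ℂ] H) : J.conj (A * B) = J.conj A * J.conj B :=
  antiunitary_conj_mul J.invol (J.conj_apply A) (J.conj_apply B) (J.conj_apply _)

theorem conj_star (A : H →L[ℂ] H) : J.conj (star A) = adjoint (J.conj A) :=
  antiunitary_conj_adjoint J.inner_map J.invol (J.conj_apply A) (J.conj_apply _)

theorem J_conj_apply_self (A : H →L[ℂ] H) : J.J (J.conj A Ω) = A Ω := by
  rw [J.conj_apply, J.fixΩ, J.invol]

end ModularConjugation

namespace StinespringData

variable {H K L : Type*} [NormedAddCommGroup H] [InnerProductSpace ℂ H] [CompleteSpace H]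
  [NormedAddCommGroup K] [InnerProductSpace ℂ K] [CompleteSpace K]
  [NormedAddCommGroup L] [InnerProductSpace ℂ L] [CompleteSpace L]
  {M : VonNeumannAlgebra H} {N : VonNeumannAlgebra K} {Ψ : (H →L[ℂ] H) →ₗ[ℂ] (K →L[ℂ] K)}
  (S : StinespringData (M : Set (H →L[ℂ] H)) Ψ L)

theorem ext {f g : L →L[ℂ] L} (h : ∀ X ∈ M, ∀ k, f (S.emb X k) = g (S.emb X k)) : f = g :=
  ContinuousLinearMap.ext_on (Submodule.dense_iff_topologicalClosure_eq_top.mpr S.dense_span)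
    (by rintro _ ⟨X, hX, k, rfl⟩; exact h X hX k)

theorem eq_adjoint_of_inner_emb {T U : L →L[ℂ] L}
    (h : ∀ X ∈ M, ∀ X' ∈ M, ∀ k k',
      ⟪T (S.emb X k), S.emb X' k'⟫_ℂ = ⟪S.emb X k, U (S.emb X' k')⟫_ℂ) :
    T = adjoint U := by
  refine S.ext fun X hX k => sub_eq_zero.mp (eq_zero_of_inner_eq_zero_of_span S.dense_span ?_)
  rintro _ ⟨X', hX', k', rfl⟩
  rw [inner_sub_right, ContinuousLinearMap.adjoint_inner_right, ← inner_conj_symm, h X hX X' hX',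
    inner_conj_symm, sub_self]

theorem inner_emb_one (hΨ : Ψ 1 = 1) (k k' : K) : ⟪S.emb 1 k, S.emb 1 k'⟫_ℂ = ⟪k, k'⟫_ℂ := by
  rw [S.inner_emb 1 1 (one_mem M) (one_mem M), star_one, one_mul, hΨ,
    one_apply_eq_self]

theorem leftAction_apply_emb_one {σ : (H →L[ℂ] H) → (L →L[ℂ] L)}
    (hσ : ∀ A ∈ M, ∀ X ∈ M, ∀ k, σ A (S.emb X k) = S.emb (A * X) k) {A : H →L[ℂ] H}
    (hA : A ∈ M) (k : K) : σ A (S.emb 1 k) = S.emb A k := by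
  rw [hσ A hA 1 (one_mem M), mul_one]

theorem leftAction_star {σ : (H →L[ℂ] H) → (L →L[ℂ] L)}
    (hσ : ∀ A ∈ M, ∀ X ∈ M, ∀ k, σ A (S.emb X k) = S.emb (A * X) k) {A : H →L[ℂ] H}
    (hA : A ∈ M) : σ (star A) = adjoint (σ A) :=
  S.eq_adjoint_of_inner_emb fun X hX X' hX' k k' => by
    rw [hσ _ (star_mem hA) X hX, hσ A hA X' hX', S.inner_emb _ _ (mul_mem (star_mem hA) hX) hX',
      S.inner_emb _ _ hX (mul_mem hA hX'), star_mul, star_star, mul_assoc]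

theorem rightAction_mul {τ : (K →L[ℂ] K) → (L →L[ℂ] L)}
    (hτ : ∀ Y ∈ N.commutant, ∀ X ∈ M, ∀ k, τ Y (S.emb X k) = S.emb X (Y k))
    {Y Y' : K →L[ℂ] K} (hY : Y ∈ N.commutant) (hY' : Y' ∈ N.commutant) :
    τ (Y * Y') = τ Y * τ Y' :=
  S.ext fun X hX k => by
    rw [hτ _ (mul_mem hY hY') X hX, mul_apply_eq_comp, mul_apply_eq_comp, hτ Y' hY' X hX,
      hτ Y hY X hX]

theorem rightAction_star (hΨ : ∀ X ∈ M, Ψ X ∈ N) {τ : (K →L[ℂ] K) → (L →L[ℂ] L)}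
    (hτ : ∀ Y ∈ N.commutant, ∀ X ∈ M, ∀ k, τ Y (S.emb X k) = S.emb X (Y k))
    {Y : K →L[ℂ] K} (hY : Y ∈ N.commutant) : τ (star Y) = adjoint (τ Y) :=
  S.eq_adjoint_of_inner_emb fun X hX X' hX' k k' => by
    have hcomm := VonNeumannAlgebra.mem_commutant_iff.mp hY _
      (hΨ _ (mul_mem (star_mem hX) hX'))
    rw [hτ _ (star_mem hY) X hX, hτ Y hY X' hX', S.inner_emb _ _ hX hX', S.inner_emb _ _ hX hX',
      ContinuousLinearMap.star_eq_adjoint, ContinuousLinearMap.adjoint_inner_left,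
      ← mul_apply_eq_comp, ← hcomm, mul_apply_eq_comp]

theorem isCyclicVec {ξ : K} (hcyc : IsCyclicVec (N : Set (K →L[ℂ] K)) ξ)
    {σ : (H →L[ℂ] H) → (L →L[ℂ] L)}
    (hσ : ∀ A ∈ M, ∀ X ∈ M, ∀ k, σ A (S.emb X k) = S.emb (A * X) k)
    (V : K →L[ℂ] L) (hV : ∀ k, V k = S.emb 1 k) {R : Set (L →L[ℂ] L)}
    (hR : ∀ X ∈ M, ∀ A ∈ N, ∃ T ∈ R, T (V ξ) = S.emb X (A ξ)) : IsCyclicVec R (V ξ) := by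
  set W := (Submodule.span ℂ {x : L | ∃ T ∈ R, x = T (V ξ)}).topologicalClosure
  have hW : IsClosed (W : Set L) := Submodule.isClosed_topologicalClosure _
  have hσV : ∀ X ∈ M, ∀ k, (σ X ∘L V) k = S.emb X k := fun X hX k => by
    rw [ContinuousLinearMap.comp_apply, hV, S.leftAction_apply_emb_one hσ hX]
  have hemb : ∀ X ∈ M, ∀ k, S.emb X k ∈ W := fun X hX k => by
    rw [← hσV X hX]
    refine mem_of_span_topologicalClosure_eq_top hcyc hW _ ?_ k
    rintro _ ⟨A, hA, rfl⟩
    obtain ⟨T, hT, hTξ⟩ := hR X hX A hA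
    rw [hσV X hX, ← hTξ]
    exact Submodule.le_topologicalClosure _ (Submodule.subset_span ⟨T, hT, rfl⟩)
  refine top_unique fun x _ => ?_
  refine mem_of_span_topologicalClosure_eq_top S.dense_span hW (ContinuousLinearMap.id ℂ L) ?_ x
  rintro _ ⟨X, hX, k, rfl⟩
  exact hemb X hX k

theorem isSeparatingVec {Ω : H} {ξ : K} (hsepM : IsSeparatingVec (M : Set (H →L[ℂ] H)) Ω)
    (hsepN : IsSeparatingVec (N : Set (K →L[ℂ] K)) ξ) {σ : (H →L[ℂ] H) → (L →L[ℂ] L)}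
    (hσ : ∀ A ∈ M, ∀ X ∈ M, ∀ k, σ A (S.emb X k) = S.emb (A * X) k)
    (V : K →L[ℂ] L) (hV : ∀ k, V k = S.emb 1 k)
    (Λ : H →L[ℂ] L) (hΛ : ∀ B ∈ M, Λ (B Ω) = S.emb B ξ) {R : Set (L →L[ℂ] L)}
    (hR_mul : ∀ T ∈ R, ∀ T' ∈ R, T * T' ∈ R) (hR_star : ∀ T ∈ R, star T ∈ R)
    (hσR : ∀ X ∈ M, σ X ∈ R) (hRV : ∀ T ∈ R, adjoint V ∘L T ∘L V ∈ N)
    (hRΛ : ∀ T ∈ R, adjoint Λ ∘L T ∘L Λ ∈ M) : IsSeparatingVec R (V ξ) := by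
  intro T hT hTξ
  have hR_adjoint_mul : ∀ T ∈ R, adjoint T ∘L T ∈ R := fun T hT => hR_mul _ (hR_star T hT) T hT
  have hΛΩ : Λ Ω = V ξ := by simpa [hV] using hΛ 1 (one_mem M)
  have hTΛ : ∀ h, T (Λ h) = 0 :=
    hsepM.apply_eq_zero_of_compression_mem Λ T (hRΛ _ (hR_adjoint_mul T hT)) (hΛΩ ▸ hTξ)
  refine S.ext fun X hX k => ?_
  have hTσX : T * σ X ∈ R := hR_mul T hT _ (hσR X hX)
  have hTσXξ : (T * σ X) (V ξ) = 0 := by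
    rw [mul_apply_eq_comp, hV, S.leftAction_apply_emb_one hσ hX, ← hΛ X hX, hTΛ]
  have := hsepN.apply_eq_zero_of_compression_mem V (T * σ X) (hRV _ (hR_adjoint_mul _ hTσX))
    hTσXξ k
  rwa [mul_apply_eq_comp, hV, S.leftAction_apply_emb_one hσ hX] at this

theorem eq_compression {Ω : H} {ξ : K} (hcyc : IsCyclicVec (M : Set (H →L[ℂ] H)) Ω)
    (hsep : IsSeparatingVec (M : Set (H →L[ℂ] H)) Ω) (Λ : H →L[ℂ] L)
    (hΛ : ∀ B ∈ M, Λ (B Ω) = S.emb B ξ) {A : K →L[ℂ] K} {C : H →L[ℂ] H} {T : L →L[ℂ] L}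
    (hC : C ∈ M) (hCA : ∀ B ∈ M, ⟪Ω, B (C Ω)⟫_ℂ = ⟪ξ, Ψ B (A ξ)⟫_ℂ)
    (hT : T (S.emb 1 ξ) = S.emb 1 (A ξ)) (hTM : adjoint Λ ∘L T ∘L Λ ∈ M) :
    C = adjoint Λ ∘L T ∘L Λ := by
  have hΛΩ : Λ Ω = S.emb 1 ξ := by simpa using hΛ 1 (one_mem M)
  refine sub_eq_zero.mp (hsep _ (sub_mem hC hTM) (eq_zero_of_inner_eq_zero_of_span hcyc ?_))
  rintro _ ⟨B, hB, rfl⟩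
  rw [sub_apply, inner_sub_right, ← ContinuousLinearMap.adjoint_inner_right,
    ← ContinuousLinearMap.star_eq_adjoint, hCA _ (star_mem hB), ContinuousLinearMap.comp_apply,
    ContinuousLinearMap.comp_apply, ContinuousLinearMap.adjoint_inner_right, hΛ B hB, hΛΩ, hT,
    S.inner_emb _ _ hB (one_mem M), mul_one, sub_self]

end StinespringData

theorem stmt18_general
    {H₁ H₂ : Type*} [NormedAddCommGroup H₁] [InnerProductSpace ℂ H₁] [CompleteSpace H₁]
    [NormedAddCommGroup H₂] [InnerProductSpace ℂ H₂] [CompleteSpace H₂]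
    (M₁ : VonNeumannAlgebra H₁) (M₂ : VonNeumannAlgebra H₂) (Ω₁ : H₁) (Ω₂ : H₂)
    (hcyc₁ : IsCyclicVec (M₁ : Set (H₁ →L[ℂ] H₁)) Ω₁)
    (hsep₁ : IsSeparatingVec (M₁ : Set (H₁ →L[ℂ] H₁)) Ω₁)
    (hcyc₂ : IsCyclicVec (M₂ : Set (H₂ →L[ℂ] H₂)) Ω₂)
    (hsep₂ : IsSeparatingVec (M₂ : Set (H₂ →L[ℂ] H₂)) Ω₂)
    (J₁ : ModularConjugation M₁ Ω₁)
    (Φ : (H₁ →L[ℂ] H₁) →ₗ[ℂ] (H₂ →L[ℂ] H₂))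
    (hmem : ∀ A ∈ M₁, Φ A ∈ M₂)
    (Φs : (H₂ →L[ℂ] H₂) →ₗ[ℂ] (H₁ →L[ℂ] H₁))
    (hmems : ∀ B ∈ M₂, Φs B ∈ M₁) (hunitals : Φs 1 = 1)
    (hadj : ∀ A ∈ M₁, ∀ B ∈ M₂, ⟪Ω₂, B (Φ A Ω₂)⟫_ℂ = ⟪Ω₁, Φs B (A Ω₁)⟫_ℂ)
    -- Stinespring data (L_{Φ^♯}, σ_{Φ^♯}, τ_{Φ^♯}, V_{Φ^♯}, Λ_{Φ^♯}) of Φ^♯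
    (Ls : Type*) [NormedAddCommGroup Ls] [InnerProductSpace ℂ Ls] [CompleteSpace Ls]
    (Ss : StinespringData (M₂ : Set (H₂ →L[ℂ] H₂)) Φs Ls)
    (σ : (H₂ →L[ℂ] H₂) → (Ls →L[ℂ] Ls))
    (hσ : ∀ A ∈ M₂, ∀ X ∈ M₂, ∀ h : H₁, σ A (Ss.emb X h) = Ss.emb (A * X) h)
    (τ : (H₁ →L[ℂ] H₁) → (Ls →L[ℂ] Ls))
    (hτ : ∀ Y ∈ M₁.commutant, ∀ X ∈ M₂, ∀ h : H₁, τ Y (Ss.emb X h) = Ss.emb X (Y h))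
    (V : H₁ →L[ℂ] Ls) (hV : ∀ h : H₁, V h = Ss.emb 1 h)
    (Λ : H₂ →L[ℂ] Ls) (hΛ : ∀ B ∈ M₂, Λ (B Ω₂) = Ss.emb B Ω₁)
    -- the anti-unitary Ĵ on L_{Φ^♯}, with inverse Ĵ* = Jh'
    (Jh Jh' : Ls → Ls)
    (hJh_inner : ∀ x y, ⟪Jh x, Jh y⟫_ℂ = ⟪y, x⟫_ℂ)
    (hJh_inv : ∀ x, Jh' (Jh x) = x) (hJh_inv' : ∀ x, Jh (Jh' x) = x)
    (hJV : ∀ x : H₁, Jh (V x) = V (J₁.J x))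
    -- γ Y = Ĵ* τ_{Φ^♯}(Y) Ĵ for Y ∈ M₁', so that β(A₁) = γ (J₁ A₁ J₁)
    (γ : (H₁ →L[ℂ] H₁) → (Ls →L[ℂ] Ls))
    (hγ : ∀ Y ∈ M₁.commutant, ∀ x : Ls, γ Y x = Jh' (τ Y (Jh x)))
    -- compressions of R = σ_{Φ^♯}(M₂) ∨ Ĵ* τ_{Φ^♯}(M₁') Ĵ land in M₁ resp. M₂
    (hRV : ∀ T ∈ doubleCommutant
        ({T | ∃ A ∈ M₂, T = σ A} ∪ {T | ∃ Y ∈ M₁.commutant, T = γ Y}),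
      adjoint V ∘L T ∘L V ∈ M₁)
    (hRΛ : ∀ T ∈ doubleCommutant
        ({T | ∃ A ∈ M₂, T = σ A} ∪ {T | ∃ Y ∈ M₁.commutant, T = γ Y}),
      adjoint Λ ∘L T ∘L Λ ∈ M₂) :
    -- Ω_{Φ^♯} is separating for R
    (∀ T ∈ doubleCommutant
        ({T | ∃ A ∈ M₂, T = σ A} ∪ {T | ∃ Y ∈ M₁.commutant, T = γ Y}),
      T (Ss.emb 1 Ω₁) = 0 → T = 0) ∧
    -- Ω_{Φ^♯} is cyclic for R
    (Submodule.span ℂ {x : Ls | ∃ T ∈ doubleCommutant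
        ({T | ∃ A ∈ M₂, T = σ A} ∪ {T | ∃ Y ∈ M₁.commutant, T = γ Y}),
      x = T (Ss.emb 1 Ω₁)}).topologicalClosure = ⊤ ∧
    -- α = σ_{Φ^♯} and β(A₁) = γ(J₁ A₁ J₁) map into R
    (∀ A ∈ M₂, σ A ∈ doubleCommutant
        ({T | ∃ A ∈ M₂, T = σ A} ∪ {T | ∃ Y ∈ M₁.commutant, T = γ Y})) ∧
    (∀ A ∈ M₁, γ (J₁.conj A) ∈ doubleCommutant
        ({T | ∃ A ∈ M₂, T = σ A} ∪ {T | ∃ Y ∈ M₁.commutant, T = γ Y})) ∧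
    -- β is a state-preserving *-homomorphism
    (∀ A ∈ M₁, ∀ B ∈ M₁, γ (J₁.conj (A * B)) = γ (J₁.conj A) * γ (J₁.conj B)) ∧
    (∀ A ∈ M₁, γ (J₁.conj (star A)) = adjoint (γ (J₁.conj A))) ∧
    (∀ A ∈ M₁, ⟪Ss.emb 1 Ω₁, γ (J₁.conj A) (Ss.emb 1 Ω₁)⟫_ℂ = ⟪Ω₁, A Ω₁⟫_ℂ) ∧
    -- factorization: Φ = σ_{Φ^♯}^♯ ∘ β, σ_{Φ^♯}^♯(T) = Λ* T Λ
    (∀ A ∈ M₁, Φ A = adjoint Λ ∘L γ (J₁.conj A) ∘L Λ) := by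
  have hJh'V : ∀ x, Jh' (V x) = V (J₁.J x) := fun x => by
    rw [← hJh_inv (V (J₁.J x)), hJV, J₁.invol]
  have hγ_mul : ∀ Y ∈ M₁.commutant, ∀ Y' ∈ M₁.commutant, γ (Y * Y') = γ Y * γ Y' :=
    fun Y hY Y' hY' => antiunitary_conj_mul hJh_inv' (hγ Y hY) (hγ Y' hY') fun x => by
      rw [hγ _ (mul_mem hY hY'), Ss.rightAction_mul hτ hY hY']
  have hγ_star : ∀ Y ∈ M₁.commutant, γ (star Y) = adjoint (γ Y) :=
    fun Y hY => antiunitary_conj_adjoint hJh_inner hJh_inv' (hγ Y hY) fun x => by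
      rw [hγ _ (star_mem hY), Ss.rightAction_star hmems hτ hY]
  have hβΩ : ∀ A ∈ M₁, γ (J₁.conj A) (V Ω₁) = V (A Ω₁) := fun A hA => by
    rw [hγ _ (J₁.conj_mem A hA), hJV, J₁.fixΩ, hV, hτ _ (J₁.conj_mem A hA) 1 (one_mem M₂), ← hV,
      hJh'V, J₁.J_conj_apply_self]
  set S : Set (Ls →L[ℂ] Ls) := {T | ∃ A ∈ M₂, T = σ A} ∪ {T | ∃ Y ∈ M₁.commutant, T = γ Y}
  have hS_star : ∀ T ∈ S, star T ∈ S := by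
    rintro _ (⟨A, hA, rfl⟩ | ⟨Y, hY, rfl⟩)
    · exact Or.inl ⟨star A, star_mem hA, (Ss.leftAction_star hσ hA).symm⟩
    · exact Or.inr ⟨star Y, star_mem hY, (hγ_star Y hY).symm⟩
  have hσR : ∀ A ∈ M₂, σ A ∈ doubleCommutant S :=
    fun A hA => Set.subset_centralizer_centralizer (Or.inl ⟨A, hA, rfl⟩)
  have hβR : ∀ A ∈ M₁, γ (J₁.conj A) ∈ doubleCommutant S :=
    fun A hA => Set.subset_centralizer_centralizer (Or.inr ⟨_, J₁.conj_mem A hA, rfl⟩)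
  have hsepR : IsSeparatingVec (doubleCommutant S) (V Ω₁) :=
    Ss.isSeparatingVec hsep₂ hsep₁ hσ V hV Λ hΛ (fun _ hT _ hT' => Set.mul_mem_centralizer hT hT')
      (fun _ => star_mem_doubleCommutant hS_star) hσR hRV hRΛ
  have hcycR : IsCyclicVec (doubleCommutant S) (V Ω₁) :=
    Ss.isCyclicVec hcyc₁ hσ V hV fun X hX A hA => ⟨σ X * γ (J₁.conj A),
      Set.mul_mem_centralizer (hσR X hX) (hβR A hA), by
        rw [mul_apply_eq_comp, hβΩ A hA, hV, Ss.leftAction_apply_emb_one hσ hX]⟩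
  rw [← hV Ω₁]
  refine ⟨hsepR, hcycR,
    hσR, hβR, fun A hA B hB => ?_, fun A hA => ?_, fun A hA => ?_, fun A hA => ?_⟩
  · rw [J₁.conj_mul, hγ_mul _ (J₁.conj_mem A hA) _ (J₁.conj_mem B hB)]
  · rw [J₁.conj_star, ← ContinuousLinearMap.star_eq_adjoint, hγ_star _ (J₁.conj_mem A hA)]
  · rw [hβΩ A hA, hV, hV, Ss.inner_emb_one hunitals]
  · exact Ss.eq_compression hcyc₂ hsep₂ Λ hΛ (hmem A hA) (hadj A hA)
      (by rw [← hV, hβΩ A hA, hV]) (hRΛ _ (hβR A hA))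

/-- Let `Ĵ` be an anti-unitary on `L_{Φ^♯}` with `Ĵ V_{Φ^♯} = V_{Φ^♯} J₁`,
and let `R` be the von Neumann algebra generated by `σ_{Φ^♯}(M₂)` and `Ĵ* τ_{Φ^♯}(M₁') Ĵ`.
If `V_{Φ^♯}* R V_{Φ^♯} ⊆ M₁` and `Λ_{Φ^♯}* R Λ_{Φ^♯} ⊆ M₂`, then `Ω_{Φ^♯} = [1 ⊗ Ω₁]`
is cyclic and separating for `R` (so `(R, Ω_{Φ^♯})` is standard), and `Φ` is factorizable:
`Φ = σ_{Φ^♯}^♯ ∘ β` with `β(A₁) = Ĵ* τ_{Φ^♯}(J₁ A₁ J₁) Ĵ`, both `σ_{Φ^♯}` and `β` being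
state-preserving *-homomorphisms into `R`. -/
theorem stmt18
    {H₁ H₂ : Type*} [NormedAddCommGroup H₁] [InnerProductSpace ℂ H₁] [CompleteSpace H₁]
    [NormedAddCommGroup H₂] [InnerProductSpace ℂ H₂] [CompleteSpace H₂]
    (M₁ : VonNeumannAlgebra H₁) (M₂ : VonNeumannAlgebra H₂) (Ω₁ : H₁) (Ω₂ : H₂)
    (hΩ₁ : ‖Ω₁‖ = 1) (hΩ₂ : ‖Ω₂‖ = 1)
    (hcyc₁ : IsCyclicVec (M₁ : Set (H₁ →L[ℂ] H₁)) Ω₁)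
    (hsep₁ : IsSeparatingVec (M₁ : Set (H₁ →L[ℂ] H₁)) Ω₁)
    (hcyc₂ : IsCyclicVec (M₂ : Set (H₂ →L[ℂ] H₂)) Ω₂)
    (hsep₂ : IsSeparatingVec (M₂ : Set (H₂ →L[ℂ] H₂)) Ω₂)
    (J₁ : ModularConjugation M₁ Ω₁) (J₂ : ModularConjugation M₂ Ω₂)
    (Φ : (H₁ →L[ℂ] H₁) →ₗ[ℂ] (H₂ →L[ℂ] H₂))
    (hmem : ∀ A ∈ M₁, Φ A ∈ M₂) (hunital : Φ 1 = 1)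
    (hCP : IsCP (M₁ : Set (H₁ →L[ℂ] H₁)) Φ)
    (hstate : IsStatePreserving (M₁ : Set (H₁ →L[ℂ] H₁)) Ω₁ Ω₂ Φ)
    (Φs : (H₂ →L[ℂ] H₂) →ₗ[ℂ] (H₁ →L[ℂ] H₁))
    (hmems : ∀ B ∈ M₂, Φs B ∈ M₁) (hunitals : Φs 1 = 1)
    (hCPs : IsCP (M₂ : Set (H₂ →L[ℂ] H₂)) Φs)
    (hstates : IsStatePreserving (M₂ : Set (H₂ →L[ℂ] H₂)) Ω₂ Ω₁ Φs)
    (hadj : ∀ A ∈ M₁, ∀ B ∈ M₂, ⟪Ω₂, B (Φ A Ω₂)⟫_ℂ = ⟪Ω₁, Φs B (A Ω₁)⟫_ℂ)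
    -- Stinespring data (L_{Φ^♯}, σ_{Φ^♯}, τ_{Φ^♯}, V_{Φ^♯}, Λ_{Φ^♯}) of Φ^♯
    (Ls : Type*) [NormedAddCommGroup Ls] [InnerProductSpace ℂ Ls] [CompleteSpace Ls]
    (Ss : StinespringData (M₂ : Set (H₂ →L[ℂ] H₂)) Φs Ls)
    (σ : (H₂ →L[ℂ] H₂) → (Ls →L[ℂ] Ls))
    (hσ : ∀ A ∈ M₂, ∀ X ∈ M₂, ∀ h : H₁, σ A (Ss.emb X h) = Ss.emb (A * X) h)
    (τ : (H₁ →L[ℂ] H₁) → (Ls →L[ℂ] Ls))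
    (hτ : ∀ Y ∈ M₁.commutant, ∀ X ∈ M₂, ∀ h : H₁, τ Y (Ss.emb X h) = Ss.emb X (Y h))
    (V : H₁ →L[ℂ] Ls) (hV : ∀ h : H₁, V h = Ss.emb 1 h)
    (Λ : H₂ →L[ℂ] Ls) (hΛ : ∀ B ∈ M₂, Λ (B Ω₂) = Ss.emb B Ω₁)
    -- the anti-unitary Ĵ on L_{Φ^♯}, with inverse Ĵ* = Jh'
    (Jh Jh' : Ls → Ls)
    (hJh_add : ∀ x y, Jh (x + y) = Jh x + Jh y)
    (hJh_smul : ∀ (c : ℂ) (x : Ls), Jh (c • x) = (starRingEnd ℂ c) • Jh x)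
    (hJh_inner : ∀ x y, ⟪Jh x, Jh y⟫_ℂ = ⟪y, x⟫_ℂ)
    (hJh_inv : ∀ x, Jh' (Jh x) = x) (hJh_inv' : ∀ x, Jh (Jh' x) = x)
    (hJV : ∀ x : H₁, Jh (V x) = V (J₁.J x))
    -- γ Y = Ĵ* τ_{Φ^♯}(Y) Ĵ for Y ∈ M₁', so that β(A₁) = γ (J₁ A₁ J₁)
    (γ : (H₁ →L[ℂ] H₁) → (Ls →L[ℂ] Ls))
    (hγ : ∀ Y ∈ M₁.commutant, ∀ x : Ls, γ Y x = Jh' (τ Y (Jh x)))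
    -- compressions of R = σ_{Φ^♯}(M₂) ∨ Ĵ* τ_{Φ^♯}(M₁') Ĵ land in M₁ resp. M₂
    (hRV : ∀ T ∈ doubleCommutant
        ({T | ∃ A ∈ M₂, T = σ A} ∪ {T | ∃ Y ∈ M₁.commutant, T = γ Y}),
      adjoint V ∘L T ∘L V ∈ M₁)
    (hRΛ : ∀ T ∈ doubleCommutant
        ({T | ∃ A ∈ M₂, T = σ A} ∪ {T | ∃ Y ∈ M₁.commutant, T = γ Y}),
      adjoint Λ ∘L T ∘L Λ ∈ M₂) :
    -- Ω_{Φ^♯} is separating for R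
    (∀ T ∈ doubleCommutant
        ({T | ∃ A ∈ M₂, T = σ A} ∪ {T | ∃ Y ∈ M₁.commutant, T = γ Y}),
      T (Ss.emb 1 Ω₁) = 0 → T = 0) ∧
    -- Ω_{Φ^♯} is cyclic for R
    (Submodule.span ℂ {x : Ls | ∃ T ∈ doubleCommutant
        ({T | ∃ A ∈ M₂, T = σ A} ∪ {T | ∃ Y ∈ M₁.commutant, T = γ Y}),
      x = T (Ss.emb 1 Ω₁)}).topologicalClosure = ⊤ ∧
    -- α = σ_{Φ^♯} and β(A₁) = γ(J₁ A₁ J₁) map into R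
    (∀ A ∈ M₂, σ A ∈ doubleCommutant
        ({T | ∃ A ∈ M₂, T = σ A} ∪ {T | ∃ Y ∈ M₁.commutant, T = γ Y})) ∧
    (∀ A ∈ M₁, γ (J₁.conj A) ∈ doubleCommutant
        ({T | ∃ A ∈ M₂, T = σ A} ∪ {T | ∃ Y ∈ M₁.commutant, T = γ Y})) ∧
    -- β is a state-preserving *-homomorphism
    (∀ A ∈ M₁, ∀ B ∈ M₁, γ (J₁.conj (A * B)) = γ (J₁.conj A) * γ (J₁.conj B)) ∧
    (∀ A ∈ M₁, γ (J₁.conj (star A)) = adjoint (γ (J₁.conj A))) ∧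
    (∀ A ∈ M₁, ⟪Ss.emb 1 Ω₁, γ (J₁.conj A) (Ss.emb 1 Ω₁)⟫_ℂ = ⟪Ω₁, A Ω₁⟫_ℂ) ∧
    -- factorization: Φ = σ_{Φ^♯}^♯ ∘ β, σ_{Φ^♯}^♯(T) = Λ* T Λ
    (∀ A ∈ M₁, Φ A = adjoint Λ ∘L γ (J₁.conj A) ∘L Λ) :=
  stmt18_general M₁ M₂ Ω₁ Ω₂ hcyc₁ hsep₁ hcyc₂ hsep₂ J₁ Φ hmem Φs hmems hunitals hadj Ls Ss σ hσ τ
    hτ V hV Λ hΛ Jh Jh' hJh_inner hJh_inv hJh_inv' hJV γ hγ hRV hRΛ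
end
end

section
/- Let Φ : (M₁,Ω₁) → (M₂,Ω₂) be a state-preserving Markov map with adjoint Φ^♯ between abelian standard-form von Neumann algebras (so Mᵢ = Mᵢ'). Then Φ is factorizable, with minimal factorization given by α = σ_{Φ^♯} and β(A) = W*τ_{Φ^♯}(J₁AJ₁)W where W : L_{Φ^♯} → L_{Φ'} is the anti-unitary W[X⊗h] = [J₂XJ₂ ⊗ J₁h]; the factorizing algebra R = σ_{Φ^♯}(M₂) ∨ τ_{Φ^♯}(M₁) has Ω_{Φ^♯} as a cyclic and separating vector. -/
open scoped InnerProductSpace ComplexOrder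
open ContinuousLinearMap (adjoint)

noncomputable section

/-! In the abelian case `J₁AJ₁ ∈ M₁'`, and `W` intertwines `τ_{Φ'}(J₁AJ₁)` with the map
`[X ⊗ h] ↦ [X ⊗ Ah]`, so `β = τ_{Φ^♯}` on `M₁ = M₁'`. All generators `σ(A)`, `τ(Y)` of `R` then
commute, and the products `σ(X)τ(Y)` send `Ω_{Φ^♯} = [1 ⊗ Ω₁]` to `[X ⊗ YΩ₁]`, which are total
in `L_{Φ^♯}` since `Ω₁` is cyclic. So `Ω_{Φ^♯}` is cyclic for a commutative set of products
lying in `R ∩ R'`, hence cyclic and separating for `R`. The factorization `Φ = Λ* τ(·) Λ` comes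
from `⟪CΩ₂, Φ(A)BΩ₂⟫ = ⟪Ω₁, Φ^♯(C*B)AΩ₁⟫`, valid because `Φ(A) ∈ M₂ = M₂'`. -/

open Submodule in
theorem eq_of_forall_inner_eq_of_dense_span {E : Type*} [NormedAddCommGroup E]
    [InnerProductSpace ℂ E] {s : Set E} (hs : Dense (span ℂ s : Set E)) {x y : E}
    (h : ∀ v ∈ s, ⟪v, x⟫_ℂ = ⟪v, y⟫_ℂ) : x = y := by
  have : innerSL ℂ x = innerSL ℂ y :=
    ContinuousLinearMap.ext_on hs fun v hv => by
      simp only [innerSL_apply_apply]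
      rw [← inner_conj_symm, h v hv, inner_conj_symm]
  exact ext_inner_right ℂ fun v => congr($this v)

theorem ModularConjugation.conj_apply_J {H : Type*} [NormedAddCommGroup H]
    [InnerProductSpace ℂ H] [CompleteSpace H] {M : VonNeumannAlgebra H} {Ω : H}
    (J : ModularConjugation M Ω) (A : H →L[ℂ] H) (h : H) : J.conj A (J.J h) = J.J (A h) := by
  rw [J.conj_apply, J.invol]

namespace IsCyclicVec

variable {H : Type*} [NormedAddCommGroup H] [InnerProductSpace ℂ H]
  {M : Set (H →L[ℂ] H)} {Ω : H}

theorem dense_s19 (hΩ : IsCyclicVec M Ω) :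
    Dense (Submodule.span ℂ {x : H | ∃ A ∈ M, x = A Ω} : Set H) :=
  Submodule.dense_iff_topologicalClosure_eq_top.2 hΩ

theorem mono {M' : Set (H →L[ℂ] H)} (hΩ : IsCyclicVec M Ω) (hM : M ⊆ M') :
    IsCyclicVec M' Ω :=
  eq_top_iff.2 <| hΩ.ge.trans <| Submodule.topologicalClosure_mono <|
    Submodule.span_mono fun _ ⟨A, hA, hx⟩ => ⟨A, hM hA, hx⟩

theorem clm_ext {E : Type*} [TopologicalSpace E] [AddCommGroup E] [Module ℂ E] [T2Space E]
    (hΩ : IsCyclicVec M Ω) {T T' : H →L[ℂ] E} (h : ∀ A ∈ M, T (A Ω) = T' (A Ω)) : T = T' :=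
  ContinuousLinearMap.ext_on hΩ.dense_s19 fun _ ⟨A, hA, hx⟩ => hx ▸ h A hA

theorem eq_of_inner (hΩ : IsCyclicVec M Ω) {x y : H} (h : ∀ A ∈ M, ⟪A Ω, x⟫_ℂ = ⟪A Ω, y⟫_ℂ) :
    x = y :=
  eq_of_forall_inner_eq_of_dense_span hΩ.dense_s19 fun _ ⟨A, hA, hx⟩ => hx ▸ h A hA

theorem apply_mem {E : Type*} [TopologicalSpace E] [AddCommGroup E] [Module ℂ E]
    (hΩ : IsCyclicVec M Ω) (f : H →L[ℂ] E) {N : Submodule ℂ E} (hN : IsClosed (N : Set E))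
    (hf : ∀ A ∈ M, f (A Ω) ∈ N) (h : H) : f h ∈ N := by
  have hle : Submodule.span ℂ {x : H | ∃ A ∈ M, x = A Ω} ≤ N.comap (f : H →ₗ[ℂ] E) :=
    Submodule.span_le.2 fun _ ⟨A, hA, hx⟩ => hx ▸ hf A hA
  have := Submodule.topologicalClosure_minimal _ hle (hN.preimage f.continuous)
  exact (hΩ ▸ this) Submodule.mem_top

theorem isSeparatingVec (hΩ : IsCyclicVec M Ω) {M' : Set (H →L[ℂ] H)}
    (hM' : M' ⊆ Set.centralizer M) : IsSeparatingVec M' Ω := fun T hT hT0 =>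
  hΩ.clm_ext fun A hA => by
    rw [← mul_apply_eq_comp, ← hM' hT A hA, mul_apply_eq_comp, hT0, map_zero, zero_apply]

open Pointwise in
theorem isCyclicVec_isSeparatingVec_doubleCommutant {S : Set (H →L[ℂ] H)}
    (hS : S ⊆ Set.centralizer S) (hΩ : IsCyclicVec (S * S) Ω) :
    IsCyclicVec (doubleCommutant S) Ω ∧ IsSeparatingVec (doubleCommutant S) Ω := by
  have hmul : S * S ⊆ Set.centralizer S :=
    Set.mul_subset_iff.2 fun _ ha _ hb => Set.mul_mem_centralizer (hS ha) (hS hb)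
  refine ⟨hΩ.mono ?_, hΩ.isSeparatingVec (Set.centralizer_subset hmul)⟩
  exact Set.mul_subset_iff.2 fun _ ha _ hb => Set.mul_mem_centralizer
    (Set.subset_centralizer_centralizer ha) (Set.subset_centralizer_centralizer hb)

end IsCyclicVec

namespace StinespringData

variable {H K L : Type*} [NormedAddCommGroup H] [InnerProductSpace ℂ H] [CompleteSpace H]
  [NormedAddCommGroup K] [InnerProductSpace ℂ K] [CompleteSpace K]
  [NormedAddCommGroup L] [InnerProductSpace ℂ L] [CompleteSpace L]
  {M : VonNeumannAlgebra H} {Φ : (H →L[ℂ] H) →ₗ[ℂ] (K →L[ℂ] K)}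
  (S : StinespringData (M : Set (H →L[ℂ] H)) Φ L)

theorem dense_s19 : Dense (Submodule.span ℂ {x : L | ∃ A ∈ M, ∃ k : K, x = S.emb A k} : Set L) :=
  Submodule.dense_iff_topologicalClosure_eq_top.2 S.dense_span

theorem clm_ext {T T' : L →L[ℂ] L} (h : ∀ X ∈ M, ∀ k, T (S.emb X k) = T' (S.emb X k)) :
    T = T' :=
  ContinuousLinearMap.ext_on S.dense_s19 fun _ ⟨X, hX, k, hx⟩ => hx ▸ h X hX k

theorem eq_of_inner_emb {x y : L} (h : ∀ X ∈ M, ∀ k, ⟪S.emb X k, x⟫_ℂ = ⟪S.emb X k, y⟫_ℂ) :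
    x = y :=
  eq_of_forall_inner_eq_of_dense_span S.dense_s19 fun _ ⟨X, hX, k, hx⟩ => hx ▸ h X hX k

theorem norm_emb_le {X : H →L[ℂ] H} (hX : X ∈ M) (k : K) :
    ‖S.emb X k‖ ≤ √‖Φ (star X * X)‖ * ‖k‖ := by
  have hsq : ‖S.emb X k‖ ^ 2 ≤ ‖Φ (star X * X)‖ * ‖k‖ ^ 2 := calc
    ‖S.emb X k‖ ^ 2 = (⟪k, Φ (star X * X) k⟫_ℂ).re := by
      rw [@norm_sq_eq_re_inner ℂ, S.inner_emb X X hX hX]; rfl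
    _ ≤ ‖k‖ * ‖Φ (star X * X) k‖ := (Complex.re_le_norm _).trans (norm_inner_le_norm _ _)
    _ ≤ ‖k‖ * (‖Φ (star X * X)‖ * ‖k‖) := by gcongr; exact ContinuousLinearMap.le_opNorm _ _
    _ = ‖Φ (star X * X)‖ * ‖k‖ ^ 2 := by ring
  rw [← Real.sqrt_sq (norm_nonneg k), ← Real.sqrt_mul (norm_nonneg _)]
  exact Real.le_sqrt_of_sq_le hsq

def embCLM {X : H →L[ℂ] H} (hX : X ∈ M) : K →L[ℂ] L :=
  (S.emb X).mkContinuous _ (S.norm_emb_le hX)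

@[simp]
theorem embCLM_apply {X : H →L[ℂ] H} (hX : X ∈ M) (k : K) : S.embCLM hX k = S.emb X k :=
  rfl

variable {σ : (H →L[ℂ] H) → (L →L[ℂ] L)} {N : VonNeumannAlgebra K} {τ : (K →L[ℂ] K) → (L →L[ℂ] L)}

theorem map_mul_of_left (hσ : ∀ A ∈ M, ∀ X ∈ M, ∀ k, σ A (S.emb X k) = S.emb (A * X) k)
    {A B : H →L[ℂ] H} (hA : A ∈ M) (hB : B ∈ M) : σ (A * B) = σ A * σ B :=
  S.clm_ext fun X hX k => by
    rw [mul_apply_eq_comp, hσ B hB X hX, hσ A hA _ (mul_mem hB hX), hσ _ (mul_mem hA hB) X hX,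
      mul_assoc]

theorem map_mul_of_right
    (hτ : ∀ Y ∈ N.commutant, ∀ X ∈ M, ∀ k, τ Y (S.emb X k) = S.emb X (Y k))
    {Y Z : K →L[ℂ] K} (hY : Y ∈ N.commutant) (hZ : Z ∈ N.commutant) : τ (Y * Z) = τ Y * τ Z :=
  S.clm_ext fun X hX k => by
    rw [mul_apply_eq_comp, hτ Z hZ X hX, hτ Y hY X hX, hτ _ (mul_mem hY hZ) X hX,
      mul_apply_eq_comp]

theorem commute_left_right
    (hσ : ∀ A ∈ M, ∀ X ∈ M, ∀ k, σ A (S.emb X k) = S.emb (A * X) k)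
    (hτ : ∀ Y ∈ N.commutant, ∀ X ∈ M, ∀ k, τ Y (S.emb X k) = S.emb X (Y k))
    {A : H →L[ℂ] H} {Y : K →L[ℂ] K} (hA : A ∈ M) (hY : Y ∈ N.commutant) :
    σ A * τ Y = τ Y * σ A :=
  S.clm_ext fun X hX k => by
    rw [mul_apply_eq_comp, mul_apply_eq_comp, hτ Y hY X hX, hσ A hA X hX, hσ A hA X hX,
      hτ Y hY _ (mul_mem hA hX)]

theorem map_star_of_right (hΦ : ∀ B ∈ M, Φ B ∈ N)
    (hτ : ∀ Y ∈ N.commutant, ∀ X ∈ M, ∀ k, τ Y (S.emb X k) = S.emb X (Y k))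
    {Y : K →L[ℂ] K} (hY : Y ∈ N.commutant) : τ (star Y) = adjoint (τ Y) :=
  S.clm_ext fun X hX k => S.eq_of_inner_emb fun X' hX' k' => by
    have hcomm : Φ (star X' * X) * star Y = star Y * Φ (star X' * X) :=
      VonNeumannAlgebra.mem_commutant_iff.1 (star_mem hY) _ (hΦ _ (mul_mem (star_mem hX') hX))
    rw [hτ _ (star_mem hY) X hX, ContinuousLinearMap.adjoint_inner_right, hτ Y hY X' hX',
      S.inner_emb _ _ hX' hX, S.inner_emb _ _ hX' hX, ← mul_apply_eq_comp, hcomm,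
      mul_apply_eq_comp, ContinuousLinearMap.star_eq_adjoint,
      ContinuousLinearMap.adjoint_inner_right]

theorem inner_emb_one_apply_emb_one (hΦ : Φ 1 = 1)
    (hτ : ∀ Y ∈ N.commutant, ∀ X ∈ M, ∀ k, τ Y (S.emb X k) = S.emb X (Y k))
    {Y : K →L[ℂ] K} (hY : Y ∈ N.commutant) (Ω : K) :
    ⟪S.emb 1 Ω, τ Y (S.emb 1 Ω)⟫_ℂ = ⟪Ω, Y Ω⟫_ℂ := by
  rw [hτ Y hY 1 (one_mem M), S.inner_emb _ _ (one_mem M) (one_mem M), star_one, one_mul, hΦ,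
    one_apply_eq_self]

theorem generators_subset_centralizer (hM : M.commutant = M) (hN : N.commutant = N)
    (hσ : ∀ A ∈ M, ∀ X ∈ M, ∀ k, σ A (S.emb X k) = S.emb (A * X) k)
    (hτ : ∀ Y ∈ N.commutant, ∀ X ∈ M, ∀ k, τ Y (S.emb X k) = S.emb X (Y k)) :
    {T | ∃ A ∈ M, T = σ A} ∪ {T | ∃ Y ∈ N, T = τ Y} ⊆
      Set.centralizer ({T | ∃ A ∈ M, T = σ A} ∪ {T | ∃ Y ∈ N, T = τ Y}) := by
  have hcommM : ∀ A ∈ M, ∀ B ∈ M, A * B = B * A := fun A hA B hB =>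
    VonNeumannAlgebra.mem_commutant_iff.1 (by rwa [hM]) A hA
  have hcommN : ∀ Y ∈ N, ∀ Z ∈ N, Y * Z = Z * Y := fun Y hY Z hZ =>
    VonNeumannAlgebra.mem_commutant_iff.1 (by rwa [hN]) Y hY
  rw [← hN] at hcommN ⊢
  rintro _ (⟨A, hA, rfl⟩ | ⟨Y, hY, rfl⟩) _ (⟨B, hB, rfl⟩ | ⟨Z, hZ, rfl⟩)
  · rw [← S.map_mul_of_left hσ hB hA, ← S.map_mul_of_left hσ hA hB, hcommM B hB A hA]
  · exact (S.commute_left_right hσ hτ hA hZ).symm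
  · exact S.commute_left_right hσ hτ hB hY
  · rw [← S.map_mul_of_right hτ hZ hY, ← S.map_mul_of_right hτ hY hZ, hcommN Z hZ Y hY]

open Pointwise in
theorem isCyclicVec_emb_one
    (hσ : ∀ A ∈ M, ∀ X ∈ M, ∀ k, σ A (S.emb X k) = S.emb (A * X) k)
    (hτ : ∀ Y ∈ N.commutant, ∀ X ∈ M, ∀ k, τ Y (S.emb X k) = S.emb X (Y k))
    {Ω : K} (hΩ : IsCyclicVec (N.commutant : Set (K →L[ℂ] K)) Ω) :
    IsCyclicVec ({T | ∃ A ∈ M, T = σ A} * {T | ∃ Y ∈ N.commutant, T = τ Y}) (S.emb 1 Ω) := by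
  set V := (Submodule.span ℂ {x | ∃ T ∈ ({T | ∃ A ∈ M, T = σ A} *
    {T | ∃ Y ∈ N.commutant, T = τ Y}), x = T (S.emb 1 Ω)}).topologicalClosure
  have hV : IsClosed (V : Set L) := Submodule.isClosed_topologicalClosure _
  have hemb : ∀ X ∈ M, ∀ k, S.emb X k ∈ V := fun X hX =>
    hΩ.apply_mem (S.embCLM hX) hV fun Y hY => Submodule.le_topologicalClosure _ <|
      Submodule.subset_span ⟨σ X * τ Y, Set.mul_mem_mul ⟨X, hX, rfl⟩ ⟨Y, hY, rfl⟩, by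
        rw [embCLM_apply, mul_apply_eq_comp, hτ Y hY 1 (one_mem M), hσ X hX 1 (one_mem M),
          mul_one]⟩
  rw [IsCyclicVec, eq_top_iff, ← S.dense_span]
  exact Submodule.topologicalClosure_minimal _
    (Submodule.span_le.2 fun _ ⟨X, hX, k, hx⟩ => hx ▸ hemb X hX k) hV

theorem eq_adjoint_comp_comp {Ω : H} {Ω' : K} (hΩ : IsCyclicVec (M : Set (H →L[ℂ] H)) Ω)
    {Λ : H →L[ℂ] L} (hΛ : ∀ B ∈ M, Λ (B Ω) = S.emb B Ω')
    (hτ : ∀ Y ∈ N.commutant, ∀ X ∈ M, ∀ k, τ Y (S.emb X k) = S.emb X (Y k))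
    {Y : K →L[ℂ] K} (hY : Y ∈ N.commutant) {T : H →L[ℂ] H} (hT : T ∈ M.commutant)
    (hTY : ∀ B ∈ M, ⟪Ω, B (T Ω)⟫_ℂ = ⟪Ω', Φ B (Y Ω')⟫_ℂ) :
    T = adjoint Λ ∘L τ Y ∘L Λ :=
  hΩ.clm_ext fun B hB => hΩ.eq_of_inner fun C hC => calc
    ⟪C Ω, T (B Ω)⟫_ℂ = ⟪Ω, (star C * B) (T Ω)⟫_ℂ := by
      rw [mul_apply_eq_comp, ← mul_apply_eq_comp B, VonNeumannAlgebra.mem_commutant_iff.1 hT B hB,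
        mul_apply_eq_comp, ContinuousLinearMap.star_eq_adjoint,
        ContinuousLinearMap.adjoint_inner_right]
    _ = ⟪Ω', Φ (star C * B) (Y Ω')⟫_ℂ := hTY _ (mul_mem (star_mem hC) hB)
    _ = ⟪C Ω, (adjoint Λ ∘L τ Y ∘L Λ) (B Ω)⟫_ℂ := by
      rw [ContinuousLinearMap.comp_apply, ContinuousLinearMap.adjoint_inner_right,
        ContinuousLinearMap.comp_apply, hΛ B hB, hΛ C hC, hτ Y hY B hB, S.inner_emb _ _ hC hB]

end StinespringData

theorem stmt19_general
    {H₁ H₂ : Type*} [NormedAddCommGroup H₁] [InnerProductSpace ℂ H₁] [CompleteSpace H₁]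
    [NormedAddCommGroup H₂] [InnerProductSpace ℂ H₂] [CompleteSpace H₂]
    (M₁ : VonNeumannAlgebra H₁) (M₂ : VonNeumannAlgebra H₂) (Ω₁ : H₁) (Ω₂ : H₂)
    (hcyc₁ : IsCyclicVec (M₁ : Set (H₁ →L[ℂ] H₁)) Ω₁)
    (hcyc₂ : IsCyclicVec (M₂ : Set (H₂ →L[ℂ] H₂)) Ω₂)
    -- the algebras are abelian and in standard form, so Mᵢ = Mᵢ'
    (habel₁ : M₁.commutant = M₁) (habel₂ : M₂.commutant = M₂)
    (J₁ : ModularConjugation M₁ Ω₁) (J₂ : ModularConjugation M₂ Ω₂)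
    (Φ : (H₁ →L[ℂ] H₁) →ₗ[ℂ] (H₂ →L[ℂ] H₂))
    (hmem : ∀ A ∈ M₁, Φ A ∈ M₂)
    (Φs : (H₂ →L[ℂ] H₂) →ₗ[ℂ] (H₁ →L[ℂ] H₁))
    (hmems : ∀ B ∈ M₂, Φs B ∈ M₁) (hunitals : Φs 1 = 1)
    (hadj : ∀ A ∈ M₁, ∀ B ∈ M₂, ⟪Ω₂, B (Φ A Ω₂)⟫_ℂ = ⟪Ω₁, Φs B (A Ω₁)⟫_ℂ)
    -- the dual map Φ'(Y) = J₁ Φ^♯(J₂ Y J₂) J₁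
    (Φ' : (H₂ →L[ℂ] H₂) →ₗ[ℂ] (H₁ →L[ℂ] H₁))
    -- Stinespring data of Φ^♯, with σ, τ, Λ
    (Ls : Type*) [NormedAddCommGroup Ls] [InnerProductSpace ℂ Ls] [CompleteSpace Ls]
    (Ss : StinespringData (M₂ : Set (H₂ →L[ℂ] H₂)) Φs Ls)
    (σ : (H₂ →L[ℂ] H₂) → (Ls →L[ℂ] Ls))
    (hσ : ∀ A ∈ M₂, ∀ X ∈ M₂, ∀ h : H₁, σ A (Ss.emb X h) = Ss.emb (A * X) h)
    (τ : (H₁ →L[ℂ] H₁) → (Ls →L[ℂ] Ls))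
    (hτ : ∀ Y ∈ M₁.commutant, ∀ X ∈ M₂, ∀ h : H₁, τ Y (Ss.emb X h) = Ss.emb X (Y h))
    (Λ : H₂ →L[ℂ] Ls) (hΛ : ∀ B ∈ M₂, Λ (B Ω₂) = Ss.emb B Ω₁)
    -- Stinespring data of Φ', with τ'
    (L' : Type*) [NormedAddCommGroup L'] [InnerProductSpace ℂ L'] [CompleteSpace L']
    (S' : StinespringData (M₂.commutant : Set (H₂ →L[ℂ] H₂)) Φ' L')
    (τ' : (H₁ →L[ℂ] H₁) → (L' →L[ℂ] L'))
    (hτ' : ∀ Y ∈ M₁.commutant, ∀ X ∈ M₂.commutant, ∀ h : H₁,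
      τ' Y (S'.emb X h) = S'.emb X (Y h))
    -- the anti-unitary W : L_{Φ^♯} → L_{Φ'}, W[X ⊗ h] = [J₂ X J₂ ⊗ J₁ h], inverse W'
    (W : Ls → L') (W' : L' → Ls)
    (hW_inv : ∀ x, W' (W x) = x)
    (hW : ∀ X ∈ M₂, ∀ h : H₁, W (Ss.emb X h) = S'.emb (J₂.conj X) (J₁.J h))
    -- β(A) = W* τ_{Φ'}(J₁ A J₁) W
    (βop : (H₁ →L[ℂ] H₁) → (Ls →L[ℂ] Ls))
    (hβ : ∀ A ∈ M₁, ∀ x : Ls, βop A x = W' (τ' (J₁.conj A) (W x))) :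
    -- in the abelian case β coincides with τ_{Φ^♯} on M₁
    (∀ A ∈ M₁, βop A = τ A) ∧
    -- Ω_{Φ^♯} is cyclic and separating for R = σ_{Φ^♯}(M₂) ∨ τ_{Φ^♯}(M₁)
    ((Submodule.span ℂ {x : Ls | ∃ T ∈ doubleCommutant
        ({T | ∃ A ∈ M₂, T = σ A} ∪ {T | ∃ A ∈ M₁, T = τ A}),
      x = T (Ss.emb 1 Ω₁)}).topologicalClosure = ⊤) ∧
    (∀ T ∈ doubleCommutant
        ({T | ∃ A ∈ M₂, T = σ A} ∪ {T | ∃ A ∈ M₁, T = τ A}),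
      T (Ss.emb 1 Ω₁) = 0 → T = 0) ∧
    -- β is a state-preserving *-homomorphism into R
    (∀ A ∈ M₁, βop A ∈ doubleCommutant
        ({T | ∃ A ∈ M₂, T = σ A} ∪ {T | ∃ A ∈ M₁, T = τ A})) ∧
    (∀ A ∈ M₁, ∀ B ∈ M₁, βop (A * B) = βop A * βop B) ∧
    (∀ A ∈ M₁, βop (star A) = adjoint (βop A)) ∧
    (∀ A ∈ M₁, ⟪Ss.emb 1 Ω₁, βop A (Ss.emb 1 Ω₁)⟫_ℂ = ⟪Ω₁, A Ω₁⟫_ℂ) ∧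
    -- α = σ_{Φ^♯} maps into R
    (∀ A ∈ M₂, σ A ∈ doubleCommutant
        ({T | ∃ A ∈ M₂, T = σ A} ∪ {T | ∃ A ∈ M₁, T = τ A})) ∧
    -- factorization Φ = σ_{Φ^♯}^♯ ∘ β, and its minimality
    (∀ A ∈ M₁, Φ A = adjoint Λ ∘L βop A ∘L Λ) ∧
    doubleCommutant ({T | ∃ A ∈ M₂, T = σ A} ∪ {T | ∃ A ∈ M₁, T = τ A}) =
      doubleCommutant ({T | ∃ A ∈ M₂, T = σ A} ∪ {T | ∃ A ∈ M₁, T = βop A}) := by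
  have hM₁ : ∀ A ∈ M₁, A ∈ M₁.commutant := fun A hA => by rwa [habel₁]
  have hβτ : ∀ A ∈ M₁, βop A = τ A := fun A hA => Ss.clm_ext fun X hX h => by
    rw [hβ A hA, hW X hX h, hτ' _ (J₁.conj_mem A hA) _ (J₂.conj_mem X hX), J₁.conj_apply_J,
      ← hW X hX, hW_inv, hτ A (hM₁ A hA) X hX h]
  set gen := {T | ∃ A ∈ M₂, T = σ A} ∪ {T | ∃ A ∈ M₁, T = τ A}
  have hgen : gen ⊆ doubleCommutant gen := Set.subset_centralizer_centralizer
  have hcyc := Ss.isCyclicVec_emb_one hσ hτ (by rwa [habel₁])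
  rw [habel₁] at hcyc
  obtain ⟨hcycR, hsepR⟩ := (hcyc.mono (Set.mul_subset_mul Set.subset_union_left
    Set.subset_union_right)).isCyclicVec_isSeparatingVec_doubleCommutant
    (Ss.generators_subset_centralizer habel₂ habel₁ hσ (habel₁ ▸ hτ))
  refine ⟨hβτ, hcycR, hsepR, fun A hA => hβτ A hA ▸ hgen (.inr ⟨A, hA, rfl⟩), ?_, ?_, ?_,
    fun A hA => hgen (.inl ⟨A, hA, rfl⟩), ?_, ?_⟩
  · intro A hA B hB
    rw [hβτ A hA, hβτ B hB, hβτ _ (mul_mem hA hB), Ss.map_mul_of_right hτ (hM₁ A hA) (hM₁ B hB)]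
  · intro A hA
    rw [hβτ A hA, hβτ _ (star_mem hA), Ss.map_star_of_right hmems hτ (hM₁ A hA)]
  · intro A hA
    rw [hβτ A hA, Ss.inner_emb_one_apply_emb_one hunitals hτ (hM₁ A hA)]
  · intro A hA
    rw [hβτ A hA]
    exact Ss.eq_adjoint_comp_comp hcyc₂ hΛ hτ (hM₁ A hA) (by rw [habel₂]; exact hmem A hA)
      (hadj A hA)
  · have hτβ : {T | ∃ A ∈ M₁, T = τ A} = {T | ∃ A ∈ M₁, T = βop A} :=
      Set.ext fun T => exists_congr fun A => and_congr_right fun hA => by rw [hβτ A hA]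
    rw [← hτβ]

/-- A state-preserving Markov map `Φ` with adjoint `Φ^♯` between
*abelian* standard-form von Neumann algebras (`Mᵢ = Mᵢ'`) is factorizable, with minimal
factorization `α = σ_{Φ^♯}` and `β(A) = W* τ_{Φ'}(J₁ A J₁) W`, where
`W : L_{Φ^♯} → L_{Φ'}` is the anti-unitary `W[X ⊗ h] = [J₂ X J₂ ⊗ J₁ h]`; the
factorizing algebra `R = σ_{Φ^♯}(M₂) ∨ τ_{Φ^♯}(M₁)` has `Ω_{Φ^♯}` as a cyclic and
separating vector, and in fact `β = τ_{Φ^♯}` on `M₁`. -/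
theorem stmt19
    {H₁ H₂ : Type*} [NormedAddCommGroup H₁] [InnerProductSpace ℂ H₁] [CompleteSpace H₁]
    [NormedAddCommGroup H₂] [InnerProductSpace ℂ H₂] [CompleteSpace H₂]
    (M₁ : VonNeumannAlgebra H₁) (M₂ : VonNeumannAlgebra H₂) (Ω₁ : H₁) (Ω₂ : H₂)
    (hΩ₁ : ‖Ω₁‖ = 1) (hΩ₂ : ‖Ω₂‖ = 1)
    (hcyc₁ : IsCyclicVec (M₁ : Set (H₁ →L[ℂ] H₁)) Ω₁)
    (hsep₁ : IsSeparatingVec (M₁ : Set (H₁ →L[ℂ] H₁)) Ω₁)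
    (hcyc₂ : IsCyclicVec (M₂ : Set (H₂ →L[ℂ] H₂)) Ω₂)
    (hsep₂ : IsSeparatingVec (M₂ : Set (H₂ →L[ℂ] H₂)) Ω₂)
    -- the algebras are abelian and in standard form, so Mᵢ = Mᵢ'
    (habel₁ : M₁.commutant = M₁) (habel₂ : M₂.commutant = M₂)
    (J₁ : ModularConjugation M₁ Ω₁) (J₂ : ModularConjugation M₂ Ω₂)
    (Φ : (H₁ →L[ℂ] H₁) →ₗ[ℂ] (H₂ →L[ℂ] H₂))
    (hmem : ∀ A ∈ M₁, Φ A ∈ M₂) (hunital : Φ 1 = 1)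
    (hCP : IsCP (M₁ : Set (H₁ →L[ℂ] H₁)) Φ)
    (hstate : IsStatePreserving (M₁ : Set (H₁ →L[ℂ] H₁)) Ω₁ Ω₂ Φ)
    (Φs : (H₂ →L[ℂ] H₂) →ₗ[ℂ] (H₁ →L[ℂ] H₁))
    (hmems : ∀ B ∈ M₂, Φs B ∈ M₁) (hunitals : Φs 1 = 1)
    (hCPs : IsCP (M₂ : Set (H₂ →L[ℂ] H₂)) Φs)
    (hstates : IsStatePreserving (M₂ : Set (H₂ →L[ℂ] H₂)) Ω₂ Ω₁ Φs)
    (hadj : ∀ A ∈ M₁, ∀ B ∈ M₂, ⟪Ω₂, B (Φ A Ω₂)⟫_ℂ = ⟪Ω₁, Φs B (A Ω₁)⟫_ℂ)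
    -- the dual map Φ'(Y) = J₁ Φ^♯(J₂ Y J₂) J₁
    (Φ' : (H₂ →L[ℂ] H₂) →ₗ[ℂ] (H₁ →L[ℂ] H₁))
    (hΦ' : ∀ Y ∈ M₂.commutant, Φ' Y = J₁.conj (Φs (J₂.conj Y)))
    -- Stinespring data of Φ^♯, with σ, τ, Λ
    (Ls : Type*) [NormedAddCommGroup Ls] [InnerProductSpace ℂ Ls] [CompleteSpace Ls]
    (Ss : StinespringData (M₂ : Set (H₂ →L[ℂ] H₂)) Φs Ls)
    (σ : (H₂ →L[ℂ] H₂) → (Ls →L[ℂ] Ls))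
    (hσ : ∀ A ∈ M₂, ∀ X ∈ M₂, ∀ h : H₁, σ A (Ss.emb X h) = Ss.emb (A * X) h)
    (τ : (H₁ →L[ℂ] H₁) → (Ls →L[ℂ] Ls))
    (hτ : ∀ Y ∈ M₁.commutant, ∀ X ∈ M₂, ∀ h : H₁, τ Y (Ss.emb X h) = Ss.emb X (Y h))
    (Λ : H₂ →L[ℂ] Ls) (hΛ : ∀ B ∈ M₂, Λ (B Ω₂) = Ss.emb B Ω₁)
    -- Stinespring data of Φ', with τ'
    (L' : Type*) [NormedAddCommGroup L'] [InnerProductSpace ℂ L'] [CompleteSpace L']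
    (S' : StinespringData (M₂.commutant : Set (H₂ →L[ℂ] H₂)) Φ' L')
    (τ' : (H₁ →L[ℂ] H₁) → (L' →L[ℂ] L'))
    (hτ' : ∀ Y ∈ M₁.commutant, ∀ X ∈ M₂.commutant, ∀ h : H₁,
      τ' Y (S'.emb X h) = S'.emb X (Y h))
    -- the anti-unitary W : L_{Φ^♯} → L_{Φ'}, W[X ⊗ h] = [J₂ X J₂ ⊗ J₁ h], inverse W'
    (W : Ls → L') (W' : L' → Ls)
    (hW_add : ∀ x y, W (x + y) = W x + W y)
    (hW_smul : ∀ (c : ℂ) (x : Ls), W (c • x) = (starRingEnd ℂ c) • W x)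
    (hW_inner : ∀ x y, ⟪W x, W y⟫_ℂ = ⟪y, x⟫_ℂ)
    (hW_inv : ∀ x, W' (W x) = x) (hW_inv' : ∀ y, W (W' y) = y)
    (hW : ∀ X ∈ M₂, ∀ h : H₁, W (Ss.emb X h) = S'.emb (J₂.conj X) (J₁.J h))
    -- β(A) = W* τ_{Φ'}(J₁ A J₁) W
    (βop : (H₁ →L[ℂ] H₁) → (Ls →L[ℂ] Ls))
    (hβ : ∀ A ∈ M₁, ∀ x : Ls, βop A x = W' (τ' (J₁.conj A) (W x))) :
    -- in the abelian case β coincides with τ_{Φ^♯} on M₁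
    (∀ A ∈ M₁, βop A = τ A) ∧
    -- Ω_{Φ^♯} is cyclic and separating for R = σ_{Φ^♯}(M₂) ∨ τ_{Φ^♯}(M₁)
    ((Submodule.span ℂ {x : Ls | ∃ T ∈ doubleCommutant
        ({T | ∃ A ∈ M₂, T = σ A} ∪ {T | ∃ A ∈ M₁, T = τ A}),
      x = T (Ss.emb 1 Ω₁)}).topologicalClosure = ⊤) ∧
    (∀ T ∈ doubleCommutant
        ({T | ∃ A ∈ M₂, T = σ A} ∪ {T | ∃ A ∈ M₁, T = τ A}),
      T (Ss.emb 1 Ω₁) = 0 → T = 0) ∧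
    -- β is a state-preserving *-homomorphism into R
    (∀ A ∈ M₁, βop A ∈ doubleCommutant
        ({T | ∃ A ∈ M₂, T = σ A} ∪ {T | ∃ A ∈ M₁, T = τ A})) ∧
    (∀ A ∈ M₁, ∀ B ∈ M₁, βop (A * B) = βop A * βop B) ∧
    (∀ A ∈ M₁, βop (star A) = adjoint (βop A)) ∧
    (∀ A ∈ M₁, ⟪Ss.emb 1 Ω₁, βop A (Ss.emb 1 Ω₁)⟫_ℂ = ⟪Ω₁, A Ω₁⟫_ℂ) ∧
    -- α = σ_{Φ^♯} maps into R
    (∀ A ∈ M₂, σ A ∈ doubleCommutant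
        ({T | ∃ A ∈ M₂, T = σ A} ∪ {T | ∃ A ∈ M₁, T = τ A})) ∧
    -- factorization Φ = σ_{Φ^♯}^♯ ∘ β, and its minimality
    (∀ A ∈ M₁, Φ A = adjoint Λ ∘L βop A ∘L Λ) ∧
    doubleCommutant ({T | ∃ A ∈ M₂, T = σ A} ∪ {T | ∃ A ∈ M₁, T = τ A}) =
      doubleCommutant ({T | ∃ A ∈ M₂, T = σ A} ∪ {T | ∃ A ∈ M₁, T = βop A}) :=
  stmt19_general M₁ M₂ Ω₁ Ω₂ hcyc₁ hcyc₂ habel₁ habel₂ J₁ J₂ Φ hmem Φs hmems hunitals hadj Φ' Ls Ss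
    σ hσ τ hτ Λ hΛ L' S' τ' hτ' W W' hW_inv hW βop hβ
end
end
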